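/- arXiv:2301.03865 — 7 statements merged into one kernel-verified Lean document; each statement's English description precedes it below -/
import Mathlib

section
/- In any homogeneous arc labeling of an oriented 5-cycle, the orientation has exactly one source and exactly one sink, joined by two directed paths, one of length 2 and one of length 3. -/
def IsHomogeneousArcLabeling {V : Type*} (A : V → V → Prop) (ℓ : V → V → ℝ) : Prop :=
  (∀ u v w, A u v → A u w → ℓ u v = ℓ u w) ∧
  (∀ u v w, A u v → A w v → ℓ u v = ℓ w v) ∧
  (∀ u v w, A u v → A v w → ℓ u v < ℓ v w)

/-- Label of the edge `{v, v+1}`. -/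
def edgeLabel (dir : ZMod 5 → Bool) (ℓ : ZMod 5 → ZMod 5 → ℝ) (v : ZMod 5) : ℝ :=
  if dir v = true then ℓ v (v+1) else ℓ (v+1) v

set_option maxHeartbeats 2000000 in
/-- An orientation of the 5-cycle is encoded by `dir : ZMod 5 → Bool`, where
`dir v = true` means the edge `{v, v+1}` is oriented from `v` to `v+1`.
If such an orientation admits a homogeneous arc labeling, then it has exactly one
source `s` and one sink, joined by two directed paths, one of length 2 and one of
length 3: either the pattern `T,T,F,F,F` (paths `s → s+1 → s+2` and
`s → s+4 → s+3 → s+2`) or the pattern `T,T,T,F,F` (paths `s → s+1 → s+2 → s+3` and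
`s → s+4 → s+3`) occurs at some `s`. -/
theorem stmt3 (dir : ZMod 5 → Bool) (ℓ : ZMod 5 → ZMod 5 → ℝ)
    (hhom : IsHomogeneousArcLabeling
      (fun v w : ZMod 5 => (w = v + 1 ∧ dir v = true) ∨ (v = w + 1 ∧ dir w = false)) ℓ) :
    (∃ s : ZMod 5, dir s = true ∧ dir (s+1) = true ∧ dir (s+2) = false ∧ dir (s+3) = false
      ∧ dir (s+4) = false) ∨
    (∃ s : ZMod 5, dir s = true ∧ dir (s+1) = true ∧ dir (s+2) = true ∧ dir (s+3) = false
      ∧ dir (s+4) = false) := by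
  obtain ⟨hout, hin, hlt⟩ := hhom
  set E := edgeLabel dir ℓ with hE
  have step : ∀ v w : ZMod 5, w = v + 1 →
      if dir v = true then
        (if dir w = true then E v < E w else E v = E w)
      else
        (if dir w = true then E v = E w else E w < E v) := by
    rintro v w rfl
    by_cases h : dir v = true
    · by_cases h' : dir (v+1) = true
      · rw [if_pos h, if_pos h']
        have := hlt v (v+1) (v+1+1) (Or.inl ⟨rfl, h⟩) (Or.inl ⟨rfl, h'⟩)
        simpa [hE, edgeLabel, h, h'] using this
      · have h'' : dir (v+1) = false := by simpa using h'
        rw [if_pos h, if_neg h']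
        have := hin v (v+1) (v+1+1) (Or.inl ⟨rfl, h⟩) (Or.inr ⟨rfl, h''⟩)
        simpa [hE, edgeLabel, h, h''] using this
    · have h2 : dir v = false := by simpa using h
      by_cases h' : dir (v+1) = true
      · rw [if_neg h, if_pos h']
        have := hout (v+1) v (v+1+1) (Or.inr ⟨rfl, h2⟩) (Or.inl ⟨rfl, h'⟩)
        simpa [hE, edgeLabel, h2, h'] using this
      · have h'' : dir (v+1) = false := by simpa using h'
        rw [if_neg h, if_neg h']
        have := hlt (v+1+1) (v+1) v (Or.inr ⟨rfl, h''⟩) (Or.inr ⟨rfl, h2⟩)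
        simpa [hE, edgeLabel, h2, h''] using this
  have k0 := step 0 1 (by decide)
  have k1 := step 1 2 (by decide)
  have k2 := step 2 3 (by decide)
  have k3 := step 3 4 (by decide)
  have k4 := step 4 0 (by decide)
  have a01 : (((0:ZMod 5))+1 = 1) := by decide
  have a02 : (((0:ZMod 5))+2 = 2) := by decide
  have a03 : (((0:ZMod 5))+3 = 3) := by decide
  have a04 : (((0:ZMod 5))+4 = 4) := by decide
  have a11 : (((1:ZMod 5))+1 = 2) := by decide
  have a12 : (((1:ZMod 5))+2 = 3) := by decide
  have a13 : (((1:ZMod 5))+3 = 4) := by decide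
  have a14 : (((1:ZMod 5))+4 = 0) := by decide
  have a21 : (((2:ZMod 5))+1 = 3) := by decide
  have a22 : (((2:ZMod 5))+2 = 4) := by decide
  have a23 : (((2:ZMod 5))+3 = 0) := by decide
  have a24 : (((2:ZMod 5))+4 = 1) := by decide
  have a31 : (((3:ZMod 5))+1 = 4) := by decide
  have a32 : (((3:ZMod 5))+2 = 0) := by decide
  have a33 : (((3:ZMod 5))+3 = 1) := by decide
  have a34 : (((3:ZMod 5))+4 = 2) := by decide
  have a41 : (((4:ZMod 5))+1 = 0) := by decide
  have a42 : (((4:ZMod 5))+2 = 1) := by decide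
  have a43 : (((4:ZMod 5))+3 = 2) := by decide
  have a44 : (((4:ZMod 5))+4 = 3) := by decide
  cases h0 : dir 0 <;> cases h1 : dir 1 <;> cases h2 : dir 2 <;> cases h3 : dir 3 <;>
    cases h4 : dir 4 <;>
  simp only [h0, h1, h2, h3, h4, Bool.false_eq_true, if_true, if_false,
    eq_self_iff_true] at k0 k1 k2 k3 k4 <;>
  first
  | (refine Or.inl ⟨(0:ZMod 5), ?_, ?_, ?_, ?_, ?_⟩ <;>
      first | assumption | simpa only [a01, a02, a03, a04, a11, a12, a13, a14, a21, a22, a23, a24, a31, a32, a33, a34, a41, a42, a43, a44] using ‹_›)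
  | (refine Or.inl ⟨(1:ZMod 5), ?_, ?_, ?_, ?_, ?_⟩ <;>
      first | assumption | simpa only [a01, a02, a03, a04, a11, a12, a13, a14, a21, a22, a23, a24, a31, a32, a33, a34, a41, a42, a43, a44] using ‹_›)
  | (refine Or.inl ⟨(2:ZMod 5), ?_, ?_, ?_, ?_, ?_⟩ <;>
      first | assumption | simpa only [a01, a02, a03, a04, a11, a12, a13, a14, a21, a22, a23, a24, a31, a32, a33, a34, a41, a42, a43, a44] using ‹_›)
  | (refine Or.inl ⟨(3:ZMod 5), ?_, ?_, ?_, ?_, ?_⟩ <;>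
      first | assumption | simpa only [a01, a02, a03, a04, a11, a12, a13, a14, a21, a22, a23, a24, a31, a32, a33, a34, a41, a42, a43, a44] using ‹_›)
  | (refine Or.inl ⟨(4:ZMod 5), ?_, ?_, ?_, ?_, ?_⟩ <;>
      first | assumption | simpa only [a01, a02, a03, a04, a11, a12, a13, a14, a21, a22, a23, a24, a31, a32, a33, a34, a41, a42, a43, a44] using ‹_›)
  | (refine Or.inr ⟨(0:ZMod 5), ?_, ?_, ?_, ?_, ?_⟩ <;>
      first | assumption | simpa only [a01, a02, a03, a04, a11, a12, a13, a14, a21, a22, a23, a24, a31, a32, a33, a34, a41, a42, a43, a44] using ‹_›)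
  | (refine Or.inr ⟨(1:ZMod 5), ?_, ?_, ?_, ?_, ?_⟩ <;>
      first | assumption | simpa only [a01, a02, a03, a04, a11, a12, a13, a14, a21, a22, a23, a24, a31, a32, a33, a34, a41, a42, a43, a44] using ‹_›)
  | (refine Or.inr ⟨(2:ZMod 5), ?_, ?_, ?_, ?_, ?_⟩ <;>
      first | assumption | simpa only [a01, a02, a03, a04, a11, a12, a13, a14, a21, a22, a23, a24, a31, a32, a33, a34, a41, a42, a43, a44] using ‹_›)
  | (refine Or.inr ⟨(3:ZMod 5), ?_, ?_, ?_, ?_, ?_⟩ <;>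
      first | assumption | simpa only [a01, a02, a03, a04, a11, a12, a13, a14, a21, a22, a23, a24, a31, a32, a33, a34, a41, a42, a43, a44] using ‹_›)
  | (refine Or.inr ⟨(4:ZMod 5), ?_, ?_, ?_, ?_, ?_⟩ <;>
      first | assumption | simpa only [a01, a02, a03, a04, a11, a12, a13, a14, a21, a22, a23, a24, a31, a32, a33, a34, a41, a42, a43, a44] using ‹_›)
  | (exfalso; linarith [k0, k1, k2, k3, k4])
end

section
/- An orientation of a graph that admits a homogeneous arc labeling contains no quasi-cycle, i.e., no cycle v_1, v_2, ..., v_n in which the arcs are (v_i, v_{i+1}) for all 1 ≤ i ≤ n-1 together with the arc (v_1, v_n). -/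
/-- An orientation admitting a homogeneous arc labeling contains no quasi-cycle:
there is no sequence of `n ≥ 3` distinct vertices `v 0, …, v (n-1)` with arcs
`v i → v (i+1)` for all `i < n - 1` together with the arc `v 0 → v (n-1)`. -/
theorem stmt4 {V : Type*} (A : V → V → Prop) (ℓ : V → V → ℝ)
    (hhom : IsHomogeneousArcLabeling A ℓ)
    (n : ℕ) (hn : 3 ≤ n) (v : ℕ → V) (hinj : Set.InjOn v (Set.Iio n))
    (harc : ∀ i, i + 1 < n → A (v i) (v (i + 1)))
    (hchord : A (v 0) (v (n - 1))) : False := by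
  obtain ⟨hout, hin, hlt⟩ := hhom
  have key : ∀ i, 1 ≤ i → i + 1 < n → ℓ (v 0) (v 1) < ℓ (v i) (v (i + 1)) := by
    intro i
    induction i with
    | zero => omega
    | succ k ih =>
      intro _ h
      rcases Nat.eq_zero_or_pos k with hk | hk
      · subst hk
        exact hlt _ _ _ (harc 0 (by omega)) (harc 1 h)
      · exact (ih hk (by omega)).trans (hlt _ _ _ (harc k (by omega)) (harc (k + 1) h))
  have h1 := key (n - 2) (by omega) (by omega)
  have hnn : n - 2 + 1 = n - 1 := by omega
  rw [hnn] at h1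
  have e1 : ℓ (v 0) (v (n - 1)) = ℓ (v 0) (v 1) := hout _ _ _ hchord (harc 0 (by omega))
  have e2 : ℓ (v 0) (v (n - 1)) = ℓ (v (n - 2)) (v (n - 1)) := by
    have := harc (n - 2) (by omega)
    rw [hnn] at this
    exact hin _ _ _ hchord this
  linarith
end

section
/- An orientation of a graph admits a homogeneous arc labeling if and only if it contains no badly oriented cycle. -/
/-- The oriented graph `A` contains a badly oriented cycle: a cycle
`v 0, v 1, …, v (n-1)` (indices mod `n`, vertices distinct, consecutive vertices
joined by an arc in one of the two directions) having some vertex whose two incident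
cycle arcs are both forward, but no vertex whose two incident cycle arcs are both
backward. -/
def HasBadlyOrientedCycle {V : Type*} (A : V → V → Prop) : Prop :=
  ∃ (n : ℕ) (_ : 3 ≤ n) (v : ZMod n → V), Function.Injective v ∧
    (∀ i, A (v i) (v (i + 1)) ∨ A (v (i + 1)) (v i)) ∧
    (∃ i, A (v (i - 1)) (v i) ∧ A (v i) (v (i + 1))) ∧
    ¬ ∃ j, A (v (j + 1)) (v j) ∧ A (v j) (v (j - 1))

def BadWalk {V : Type*} (A : V → V → Prop) : Prop :=
  ∃ (n : ℕ) (_ : 0 < n) (v : ZMod n → V),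
    (∀ i, A (v i) (v (i + 1)) ∨ A (v (i + 1)) (v i)) ∧
    (∃ i, A (v (i - 1)) (v i) ∧ A (v i) (v (i + 1))) ∧
    ¬ ∃ j, A (v (j + 1)) (v j) ∧ A (v j) (v (j - 1))

lemma no_badwalk_of_labeling {V : Type*} {A : V → V → Prop}
    (hA : ∀ u v, A u v → ¬ A v u) {ℓ : V → V → ℝ}
    (hℓ : IsHomogeneousArcLabeling A ℓ) : ¬ BadWalk A := by
  obtain ⟨h1, h2, h3⟩ := hℓ
  rintro ⟨n, hn, v, hadj, ⟨i0, hf1, hf2⟩, hnb⟩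
  haveI : NeZero n := ⟨by omega⟩
  classical
  set L : ZMod n → ℝ :=
    fun i => if A (v i) (v (i + 1)) then ℓ (v i) (v (i + 1)) else ℓ (v (i + 1)) (v i) with hL
  have hpos : ∀ i, A (v i) (v (i + 1)) → L i = ℓ (v i) (v (i + 1)) := by
    intro i h; simp only [hL]; rw [if_pos h]
  have hneg : ∀ i, A (v (i + 1)) (v i) → L i = ℓ (v (i + 1)) (v i) := by
    intro i h; simp only [hL]; rw [if_neg (hA _ _ h)]
  have hstep : ∀ i, L i ≤ L (i + 1) := by
    intro i
    rcases hadj i with hF | hB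
    · rcases hadj (i + 1) with hF' | hB'
      · rw [hpos i hF, hpos (i + 1) hF']
        exact le_of_lt (h3 _ _ _ hF hF')
      · rw [hpos i hF, hneg (i + 1) hB']
        exact le_of_eq (h2 _ _ _ hF hB')
    · rcases hadj (i + 1) with hF' | hB'
      · rw [hneg i hB, hpos (i + 1) hF']
        exact le_of_eq (h1 _ _ _ hB hF')
      · exfalso
        refine hnb ⟨i + 1, hB', ?_⟩
        rw [add_sub_cancel_right]
        exact hB
  have hkey : L (i0 - 1) < L i0 := by
    have hp : A (v (i0 - 1)) (v (i0 - 1 + 1)) := by rw [sub_add_cancel]; exact hf1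
    rw [hpos _ hp, hpos _ hf2, sub_add_cancel]
    exact h3 _ _ _ hf1 hf2
  have hmono : ∀ k : ℕ, L i0 ≤ L (i0 + k) := by
    intro k
    induction k with
    | zero => simp
    | succ k ih =>
      have e : ((k + 1 : ℕ) : ZMod n) = (k : ZMod n) + 1 := by push_cast; ring
      rw [e, ← add_assoc]
      exact le_trans ih (hstep _)
  have hn1 : ((n - 1 : ℕ) : ZMod n) = -1 := by
    rw [Nat.cast_sub (by omega), Nat.cast_one, ZMod.natCast_self]; ring
  have hfin := hmono (n - 1)
  rw [hn1] at hfin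
  have : L i0 ≤ L (i0 - 1) := by rwa [← sub_eq_add_neg] at hfin
  linarith


section AuxZMod
lemma zmod_val_add_one {L : ℕ} (hL : 0 < L) (i : ZMod L) :
    (i + 1).val = if i.val = L - 1 then 0 else i.val + 1 := by
  haveI : NeZero L := ⟨by omega⟩
  have hi : i.val < L := ZMod.val_lt i
  rw [ZMod.val_add, ZMod.val_one_eq_one_mod]
  rcases Nat.lt_or_ge 1 L with h1 | h1
  · rw [Nat.mod_eq_of_lt h1]
    by_cases h : i.val = L - 1
    · rw [if_pos h, h, show L - 1 + 1 = L from by omega, Nat.mod_self]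
    · rw [if_neg h, Nat.mod_eq_of_lt (by omega)]
  · have hL1 : L = 1 := by omega
    subst hL1
    have h0 : i.val = 0 := by omega
    simp [h0]

lemma zmod_val_sub_one {L : ℕ} (hL : 0 < L) (i : ZMod L) :
    (i - 1).val = if i.val = 0 then L - 1 else i.val - 1 := by
  haveI : NeZero L := ⟨by omega⟩
  have hi : i.val < L := ZMod.val_lt i
  have hm1 : (-1 : ZMod L) = ((L - 1 : ℕ) : ZMod L) := by
    rw [Nat.cast_sub (by omega), Nat.cast_one, ZMod.natCast_self]; ring
  rw [sub_eq_add_neg, hm1, ZMod.val_add, ZMod.val_natCast,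
    Nat.mod_eq_of_lt (show L - 1 < L from by omega)]
  by_cases h : i.val = 0
  · rw [if_pos h, h, Nat.zero_add, Nat.mod_eq_of_lt (show L - 1 < L from by omega)]
  · rw [if_neg h, show i.val + (L - 1) = (i.val - 1) + L from by omega,
      Nat.add_mod_right, Nat.mod_eq_of_lt (show i.val - 1 < L from by omega)]
end AuxZMod

lemma sub_ok {V : Type*} {A : V → V → Prop} (hA : ∀ u v, A u v → ¬ A v u)
    {n : ℕ} (hn : 0 < n) (v' : ZMod n → V)
    (hadj : ∀ i, A (v' i) (v' (i + 1)) ∨ A (v' (i + 1)) (v' i))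
    (hnb : ¬ ∃ j, A (v' (j + 1)) (v' j) ∧ A (v' j) (v' (j - 1)))
    (s L : ℕ) (hL : 2 ≤ L) (hsL : s + L ≤ n)
    (hident : v' ((s : ℕ) : ZMod n) = v' ((s + L : ℕ) : ZMod n))
    (hJ : ¬ (A (v' (((s : ℕ) : ZMod n) + 1)) (v' ((s : ℕ) : ZMod n)) ∧
             A (v' ((s : ℕ) : ZMod n)) (v' ((s + L - 1 : ℕ) : ZMod n))))
    (v₂ : ZMod L → V) (hv₂ : ∀ i, v₂ i = v' ((s + i.val : ℕ) : ZMod n)) :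
    (∀ i : ZMod L, v₂ (i + 1) = v' (((s + i.val : ℕ) : ZMod n) + 1)) ∧
    (∀ i : ZMod L, A (v₂ i) (v₂ (i + 1)) ∨ A (v₂ (i + 1)) (v₂ i)) ∧
    (¬ ∃ j : ZMod L, A (v₂ (j + 1)) (v₂ j) ∧ A (v₂ j) (v₂ (j - 1))) := by
  haveI : NeZero n := ⟨by omega⟩
  haveI : NeZero L := ⟨by omega⟩
  have hstep₂ : ∀ i : ZMod L, v₂ (i + 1) = v' (((s + i.val : ℕ) : ZMod n) + 1) := by
    intro i
    rw [hv₂, zmod_val_add_one (show 0 < L from by omega)]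
    by_cases h : i.val = L - 1
    · rw [if_pos h, Nat.add_zero, hident, h]
      congr 1
      rw [show s + L = s + (L - 1) + 1 from by omega]
      push_cast
      ring
    · rw [if_neg h]
      congr 1
      push_cast
      ring
  have hadj₂ : ∀ i : ZMod L, A (v₂ i) (v₂ (i + 1)) ∨ A (v₂ (i + 1)) (v₂ i) := by
    intro i
    rw [hv₂, hstep₂]
    exact hadj _
  have hnb₂ : ¬ ∃ j : ZMod L, A (v₂ (j + 1)) (v₂ j) ∧ A (v₂ j) (v₂ (j - 1)) := by
    rintro ⟨j, hb1, hb2⟩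
    rw [hstep₂ j, hv₂ j] at hb1
    have hj' : v₂ j = v' (((s + (j - 1).val : ℕ) : ZMod n) + 1) := by
      have := hstep₂ (j - 1)
      rwa [sub_add_cancel] at this
    rw [hj', hv₂ (j - 1)] at hb2
    by_cases h0 : j.val = 0
    · have e2 : (j - 1).val = L - 1 := by
        rw [zmod_val_sub_one (show 0 < L from by omega), if_pos h0]
      rw [h0, Nat.add_zero] at hb1
      rw [e2] at hb2
      refine hJ ⟨hb1, ?_⟩
      have hc : (((s + (L - 1) : ℕ) : ZMod n) + 1) = ((s + L : ℕ) : ZMod n) := by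
        rw [show s + L = s + (L - 1) + 1 from by omega]
        push_cast
        ring
      rw [hc, ← hident] at hb2
      rw [show (s + L - 1 : ℕ) = s + (L - 1) from by omega]
      exact hb2
    · have e2 : (j - 1).val = j.val - 1 := by
        rw [zmod_val_sub_one (show 0 < L from by omega), if_neg h0]
      rw [e2] at hb2
      refine hnb ⟨((s + j.val : ℕ) : ZMod n), hb1, ?_⟩
      have hc1 : (((s + (j.val - 1) : ℕ) : ZMod n) + 1) = ((s + j.val : ℕ) : ZMod n) := by
        rw [show s + j.val = s + (j.val - 1) + 1 from by omega]
        push_cast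
        ring
      have hc2 : ((s + (j.val - 1) : ℕ) : ZMod n) = ((s + j.val : ℕ) : ZMod n) - 1 := by
        rw [← hc1]; ring
      rw [hc1, hc2] at hb2
      exact hb2
  exact ⟨hstep₂, hadj₂, hnb₂⟩

lemma sub_ff {V : Type*} {A : V → V → Prop} {n : ℕ} (hn : 0 < n) (v' : ZMod n → V)
    (s L : ℕ) (hL : 2 ≤ L)
    (v₂ : ZMod L → V) (hv₂ : ∀ i, v₂ i = v' ((s + i.val : ℕ) : ZMod n))
    (hstep₂ : ∀ i : ZMod L, v₂ (i + 1) = v' (((s + i.val : ℕ) : ZMod n) + 1))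
    (t : ℕ) (ht : t < L)
    (h1 : A (v' ((s + (if t = 0 then L - 1 else t - 1) : ℕ) : ZMod n))
            (v' (((s + (if t = 0 then L - 1 else t - 1) : ℕ) : ZMod n) + 1)))
    (h2 : A (v' ((s + t : ℕ) : ZMod n)) (v' (((s + t : ℕ) : ZMod n) + 1))) :
    ∃ i : ZMod L, A (v₂ (i - 1)) (v₂ i) ∧ A (v₂ i) (v₂ (i + 1)) := by
  haveI : NeZero L := ⟨by omega⟩
  have hval : ((t : ZMod L)).val = t := ZMod.val_cast_of_lt ht
  have hsub : ((t : ZMod L) - 1).val = if t = 0 then L - 1 else t - 1 := by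
    rw [zmod_val_sub_one (show 0 < L from by omega), hval]
  refine ⟨(t : ZMod L), ?_, ?_⟩
  · have e1 : v₂ ((t : ZMod L) - 1)
        = v' ((s + (if t = 0 then L - 1 else t - 1) : ℕ) : ZMod n) := by
      rw [hv₂, hsub]
    have e2 : v₂ (t : ZMod L)
        = v' (((s + (if t = 0 then L - 1 else t - 1) : ℕ) : ZMod n) + 1) := by
      have := hstep₂ ((t : ZMod L) - 1)
      rw [sub_add_cancel] at this
      rw [this, hsub]
    rw [e1, e2]
    exact h1
  · rw [hv₂, hstep₂, hval]
    exact h2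

lemma badwalk_aux {V : Type*} {A : V → V → Prop} (hA : ∀ u v, A u v → ¬ A v u) :
    ∀ n : ℕ, 0 < n → ∀ v : ZMod n → V,
      (∀ i, A (v i) (v (i + 1)) ∨ A (v (i + 1)) (v i)) →
      (∃ i, A (v (i - 1)) (v i) ∧ A (v i) (v (i + 1))) →
      (¬ ∃ j, A (v (j + 1)) (v j) ∧ A (v j) (v (j - 1))) →
      HasBadlyOrientedCycle A := by
  intro n
  induction n using Nat.strong_induction_on with
  | _ n IH =>
  intro hn v hadj hff hnb
  haveI : NeZero n := ⟨by omega⟩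
  by_cases h3 : 3 ≤ n
  swap
  · -- n = 1 or n = 2 : impossible
    exfalso
    have hn2 : n < 3 := by omega
    interval_cases n
    · have h01 : ((0 : ZMod 1) + 1) = 0 := by decide
      rcases hadj 0 with h | h
      · rw [h01] at h; exact hA _ _ h h
      · rw [h01] at h; exact hA _ _ h h
    · obtain ⟨i, h1, h2⟩ := hff
      have e : i - 1 = i + 1 := by
        have : (-1 : ZMod 2) = 1 := by decide
        rw [sub_eq_add_neg, this]
      rw [e] at h1
      exact hA _ _ h2 h1
  · by_cases hinj : Function.Injective v
    · exact ⟨n, h3, v, hinj, hadj, hff, hnb⟩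
    rw [Function.not_injective_iff] at hinj
    obtain ⟨a, b, hvab, hab⟩ := hinj
    have key : ∀ v' : ZMod n → V,
        (∀ i, A (v' i) (v' (i + 1)) ∨ A (v' (i + 1)) (v' i)) →
        (∃ i, A (v' (i - 1)) (v' i) ∧ A (v' i) (v' (i + 1))) →
        (¬ ∃ j, A (v' (j + 1)) (v' j) ∧ A (v' j) (v' (j - 1))) →
        ∀ c : ZMod n, c ≠ 0 → v' 0 = v' c → HasBadlyOrientedCycle A := by
      intro v' hadj' hff' hnb' c hc0 hcc
      set k := c.val with hkdef
      have hkn : k < n := ZMod.val_lt c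
      have hck : ((k : ℕ) : ZMod n) = c := ZMod.natCast_rightInverse c
      have hk0 : 0 < k := by
        rcases Nat.eq_zero_or_pos k with h | h
        · exfalso; apply hc0; rw [← hck, h, Nat.cast_zero]
        · exact h
      by_cases hk1 : k = 1
      · exfalso
        have h1 : v' 0 = v' 1 := by
          rw [hcc]; congr 1; rw [← hck, hk1, Nat.cast_one]
        rcases hadj' 0 with h | h
        · rw [zero_add, ← h1] at h; exact hA _ _ h h
        · rw [zero_add, ← h1] at h; exact hA _ _ h h
      have hm1 : ((n - 1 : ℕ) : ZMod n) = -1 := by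
        rw [Nat.cast_sub (by omega), Nat.cast_one, ZMod.natCast_self]; ring
      by_cases hkn1 : k = n - 1
      · exfalso
        have h1 : v' (-1) = v' 0 := by
          rw [← hm1, ← hkn1, hck, ← hcc]
        rcases hadj' (-1) with h | h
        · rw [neg_add_cancel, h1] at h; exact hA _ _ h h
        · rw [neg_add_cancel, h1] at h; exact hA _ _ h h
      have hk2 : 2 ≤ k := by omega
      have hnk2 : 2 ≤ n - k := by omega
      have hk1c : ((k - 1 : ℕ) : ZMod n) + 1 = ((k : ℕ) : ZMod n) := by
        have e : ((k - 1 + 1 : ℕ) : ZMod n) = ((k - 1 : ℕ) : ZMod n) + 1 := by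
          push_cast; ring
        rw [← e]; congr 1; omega
      have hn1c : ((n - 1 : ℕ) : ZMod n) + 1 = 0 := by rw [hm1]; ring
      have hv0k : v' ((k : ℕ) : ZMod n) = v' 0 := by rw [hck, ← hcc]
      have hvn : v' ((n : ℕ) : ZMod n) = v' 0 := by rw [ZMod.natCast_self]
      have hnBBp : ∀ e : ZMod n,
          ¬ (A (v' (e + 1 + 1)) (v' (e + 1)) ∧ A (v' (e + 1)) (v' e)) := by
        rintro e ⟨p1, p2⟩
        refine hnb' ⟨e + 1, p1, ?_⟩
        rw [add_sub_cancel_right]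
        exact p2
      have hident1 : v' ((0 : ℕ) : ZMod n) = v' ((0 + k : ℕ) : ZMod n) := by
        rw [Nat.cast_zero, Nat.zero_add, hv0k]
      have hident2 : v' ((k : ℕ) : ZMod n) = v' ((k + (n - k) : ℕ) : ZMod n) := by
        rw [show k + (n - k) = n from by omega, hvn, hv0k]
      have use : ∀ s L : ℕ, 2 ≤ L → s + L ≤ n → L < n →
          v' ((s : ℕ) : ZMod n) = v' ((s + L : ℕ) : ZMod n) →
          ¬ (A (v' (((s : ℕ) : ZMod n) + 1)) (v' ((s : ℕ) : ZMod n)) ∧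
             A (v' ((s : ℕ) : ZMod n)) (v' ((s + L - 1 : ℕ) : ZMod n))) →
          ∀ t : ℕ, t < L →
          A (v' ((s + (if t = 0 then L - 1 else t - 1) : ℕ) : ZMod n))
            (v' (((s + (if t = 0 then L - 1 else t - 1) : ℕ) : ZMod n) + 1)) →
          A (v' ((s + t : ℕ) : ZMod n)) (v' (((s + t : ℕ) : ZMod n) + 1)) →
          HasBadlyOrientedCycle A := by
        intro s L hL hsL hLn hid hJ t ht hF1 hF2
        obtain ⟨hstep₂, hadj₂, hnb₂⟩ :=
          sub_ok hA (show 0 < n from by omega) v' hadj' hnb' s L hL hsL hid hJ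
            (fun i => v' ((s + i.val : ℕ) : ZMod n)) (fun _ => rfl)
        obtain ⟨i, hi⟩ :=
          sub_ff (show 0 < n from by omega) v' s L hL
            (fun i => v' ((s + i.val : ℕ) : ZMod n)) (fun _ => rfl) hstep₂ t ht hF1 hF2
        exact IH L hLn (by omega) _ hadj₂ ⟨i, hi⟩ hnb₂
      -- locate the FF vertex
      obtain ⟨i0, hg1, hg2⟩ := hff'
      set p := i0.val with hpdef
      have hpn : p < n := ZMod.val_lt i0
      have hpc : ((p : ℕ) : ZMod n) = i0 := ZMod.natCast_rightInverse i0
      by_cases hp0 : p = 0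
      · -- FF at position 0 : F(-1) ∧ F 0
        have hi00 : i0 = 0 := by rw [← hpc, hp0, Nat.cast_zero]
        have hFm1 : A (v' ((n - 1 : ℕ) : ZMod n)) (v' (((n - 1 : ℕ) : ZMod n) + 1)) := by
          rw [hn1c, hm1]
          rw [hi00, zero_sub] at hg1
          exact hg1
        have hF0 : A (v' 0) (v' 1) := by
          rw [hi00, zero_add] at hg2; exact hg2
        rcases hadj' ((k - 1 : ℕ) : ZMod n) with hFk1 | hBk1
        · -- F (k-1) : use W1 with junction FF
          refine use 0 k hk2 (by omega) (by omega) hident1 ?_ 0 (by omega) ?_ ?_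
          · rintro ⟨hb1, -⟩
            rw [Nat.cast_zero, zero_add] at hb1
            exact hA _ _ hF0 hb1
          · rw [if_pos rfl, Nat.zero_add]
            exact hFk1
          · rw [Nat.add_zero, Nat.cast_zero, zero_add]
            exact hF0
        · -- B (k-1) : hence F k, use W2 with junction FF
          have hnb2 := hnBBp ((k - 1 : ℕ) : ZMod n)
          rw [hk1c] at hnb2 hBk1
          have hFk : A (v' ((k : ℕ) : ZMod n)) (v' (((k : ℕ) : ZMod n) + 1)) := by
            rcases hadj' ((k : ℕ) : ZMod n) with h | h
            · exact h
            · exact absurd ⟨h, hBk1⟩ hnb2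
          refine use k (n - k) hnk2 (by omega) (by omega) hident2 ?_ 0 (by omega) ?_ ?_
          · rintro ⟨hb1, -⟩
            exact hA _ _ hFk hb1
          · rw [if_pos rfl, show k + (n - k - 1) = n - 1 from by omega]
            exact hFm1
          · rw [Nat.add_zero]
            exact hFk
      by_cases hpk : p = k
      · -- FF at position k : F (k-1) ∧ F k
        have hik : i0 = ((k : ℕ) : ZMod n) := by rw [← hpc, hpk]
        have hFk1 : A (v' ((k - 1 : ℕ) : ZMod n)) (v' (((k - 1 : ℕ) : ZMod n) + 1)) := by
          rw [hk1c, ← hik]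
          have e : ((k - 1 : ℕ) : ZMod n) = i0 - 1 := by
            rw [← hik] at hk1c
            rw [← hk1c, add_sub_cancel_right]
          rw [e]
          exact hg1
        have hFk : A (v' ((k : ℕ) : ZMod n)) (v' (((k : ℕ) : ZMod n) + 1)) := by
          rw [← hik]; exact hg2
        rcases hadj' ((n - 1 : ℕ) : ZMod n) with hFn1 | hBn1
        · -- F (n-1) : use W2
          refine use k (n - k) hnk2 (by omega) (by omega) hident2 ?_ 0 (by omega) ?_ ?_
          · rintro ⟨hb1, -⟩
            exact hA _ _ hFk hb1
          · rw [if_pos rfl, show k + (n - k - 1) = n - 1 from by omega]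
            exact hFn1
          · rw [Nat.add_zero]
            exact hFk
        · -- B (n-1) : hence F 0, use W1
          have hnb2 := hnBBp ((n - 1 : ℕ) : ZMod n)
          rw [hn1c, zero_add] at hnb2
          rw [hn1c] at hBn1
          have hF0 : A (v' 0) (v' 1) := by
            rcases hadj' 0 with h | h
            · rw [zero_add] at h
              exact h
            · rw [zero_add] at h
              exact absurd ⟨h, hBn1⟩ hnb2
          refine use 0 k hk2 (by omega) (by omega) hident1 ?_ 0 (by omega) ?_ ?_
          · rintro ⟨hb1, -⟩
            rw [Nat.cast_zero, zero_add] at hb1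
            exact hA _ _ hF0 hb1
          · rw [if_pos rfl, Nat.zero_add]
            exact hFk1
          · rw [Nat.add_zero, Nat.cast_zero, zero_add]
            exact hF0
      -- now p ≥ 1, p ≠ k : interior FF
      have hp1 : 1 ≤ p := by omega
      have hip1 : ((p - 1 : ℕ) : ZMod n) = i0 - 1 := by
        rw [Nat.cast_sub (by omega), Nat.cast_one, hpc]
      have hFp1 : A (v' ((p - 1 : ℕ) : ZMod n)) (v' (((p - 1 : ℕ) : ZMod n) + 1)) := by
        rw [hip1, sub_add_cancel]
        exact hg1
      have hFp : A (v' ((p : ℕ) : ZMod n)) (v' (((p : ℕ) : ZMod n) + 1)) := by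
        rw [hpc]; exact hg2
      by_cases hplt : p < k
      · -- FF interior to W1
        by_cases hJ1 : (A (v' (((0 : ℕ) : ZMod n) + 1)) (v' ((0 : ℕ) : ZMod n)) ∧
            A (v' ((0 : ℕ) : ZMod n)) (v' ((0 + k - 1 : ℕ) : ZMod n)))
        · -- junction of W1 is BB : use W2 with junction FF
          obtain ⟨hb0, hbk⟩ := hJ1
          rw [Nat.cast_zero, zero_add] at hb0
          rw [Nat.cast_zero, show (0 + k - 1 : ℕ) = k - 1 from by omega] at hbk
          have hBk1 : A (v' ((k : ℕ) : ZMod n)) (v' ((k - 1 : ℕ) : ZMod n)) := by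
            rw [hv0k]
            exact hbk
          have hnbk := hnBBp ((k - 1 : ℕ) : ZMod n)
          rw [hk1c] at hnbk
          have hFk : A (v' ((k : ℕ) : ZMod n)) (v' (((k : ℕ) : ZMod n) + 1)) := by
            rcases hadj' ((k : ℕ) : ZMod n) with h | h
            · exact h
            · exact absurd ⟨h, hBk1⟩ hnbk
          have hnbn := hnBBp ((n - 1 : ℕ) : ZMod n)
          rw [hn1c, zero_add] at hnbn
          have hFn1 : A (v' ((n - 1 : ℕ) : ZMod n)) (v' (((n - 1 : ℕ) : ZMod n) + 1)) := by
            rcases hadj' ((n - 1 : ℕ) : ZMod n) with h | h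
            · exact h
            · rw [hn1c] at h
              exact absurd ⟨hb0, h⟩ hnbn
          refine use k (n - k) hnk2 (by omega) (by omega) hident2 ?_ 0 (by omega) ?_ ?_
          · rintro ⟨hb1, -⟩
            exact hA _ _ hFk hb1
          · rw [if_pos rfl, show k + (n - k - 1) = n - 1 from by omega]
            exact hFn1
          · rw [Nat.add_zero]
            exact hFk
        · -- use W1 with interior FF at t = p
          refine use 0 k hk2 (by omega) (by omega) hident1 hJ1 p hplt ?_ ?_
          · rw [if_neg hp0, Nat.zero_add]
            exact hFp1
          · rw [Nat.zero_add]
            exact hFp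
      · -- FF interior to W2, p > k
        have hpgt : k < p := by omega
        by_cases hJ2 : (A (v' (((k : ℕ) : ZMod n) + 1)) (v' ((k : ℕ) : ZMod n)) ∧
            A (v' ((k : ℕ) : ZMod n)) (v' ((k + (n - k) - 1 : ℕ) : ZMod n)))
        · -- junction of W2 is BB : use W1 with junction FF
          obtain ⟨hbk, hbn⟩ := hJ2
          rw [show (k + (n - k) - 1 : ℕ) = n - 1 from by omega] at hbn
          have hBn1 : A (v' 0) (v' ((n - 1 : ℕ) : ZMod n)) := by
            rw [← hv0k]
            exact hbn
          have hnbn := hnBBp ((n - 1 : ℕ) : ZMod n)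
          rw [hn1c, zero_add] at hnbn
          have hF0 : A (v' 0) (v' 1) := by
            rcases hadj' 0 with h | h
            · rw [zero_add] at h
              exact h
            · rw [zero_add] at h
              exact absurd ⟨h, hBn1⟩ hnbn
          have hnbk := hnBBp ((k - 1 : ℕ) : ZMod n)
          rw [hk1c] at hnbk
          have hFk1 : A (v' ((k - 1 : ℕ) : ZMod n)) (v' (((k - 1 : ℕ) : ZMod n) + 1)) := by
            rcases hadj' ((k - 1 : ℕ) : ZMod n) with h | h
            · exact h
            · rw [hk1c] at h
              exact absurd ⟨hbk, h⟩ hnbk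
          refine use 0 k hk2 (by omega) (by omega) hident1 ?_ 0 (by omega) ?_ ?_
          · rintro ⟨hb1, -⟩
            rw [Nat.cast_zero, zero_add] at hb1
            exact hA _ _ hF0 hb1
          · rw [if_pos rfl, Nat.zero_add]
            exact hFk1
          · rw [Nat.add_zero, Nat.cast_zero, zero_add]
            exact hF0
        · -- use W2 with interior FF at t = p - k
          refine use k (n - k) hnk2 (by omega) (by omega) hident2 hJ2 (p - k) (by omega) ?_ ?_
          · rw [if_neg (show ¬ (p - k = 0) from by omega),
              show k + (p - k - 1) = p - 1 from by omega]
            exact hFp1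
          · rw [show k + (p - k) = p from by omega]
            exact hFp
    exact key (fun i => v (i + a)) (by
        intro i
        have h := hadj (i + a)
        rw [show i + a + 1 = i + 1 + a from by ring] at h
        exact h)
      (by
        obtain ⟨i, h1, h2⟩ := hff
        refine ⟨i - a, ?_, ?_⟩
        · show A (v (i - a - 1 + a)) (v (i - a + a))
          rw [show i - a - 1 + a = i - 1 from by ring, show i - a + a = i from by ring]
          exact h1
        · show A (v (i - a + a)) (v (i - a + 1 + a))
          rw [show i - a + a = i from by ring, show i - a + 1 + a = i + 1 from by ring]
          exact h2)
      (by
        rintro ⟨j, h1, h2⟩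
        refine hnb ⟨j + a, ?_, ?_⟩
        · rw [show j + a + 1 = j + 1 + a from by ring]
          exact h1
        · rw [show j + a - 1 = j - 1 + a from by ring]
          exact h2)
      (b - a) (sub_ne_zero_of_ne (Ne.symm hab))
      (by
        show v (0 + a) = v (b - a + a)
        rw [zero_add, sub_add_cancel]
        exact hvab)

def SlotRel {V : Type*} (A : V → V → Prop) : V × Bool → V × Bool → Prop := fun s t =>
  (s.2 = true ∧ t.2 = false ∧ A s.1 t.1) ∨
  (s.2 = false ∧ t.2 = true ∧ A t.1 s.1) ∨
  (s.2 = false ∧ t.2 = true ∧ s.1 = t.1)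

lemma slot_chain {V : Type*} {A : V → V → Prop} {s t : V × Bool}
    (h : Relation.ReflTransGen (SlotRel A) s t) :
    ∃ (n : ℕ) (w : ℕ → V) (d : ℕ → Bool),
      w 0 = s.1 ∧ w n = t.1 ∧
      (∀ i < n, (d i = true ∧ A (w i) (w (i + 1))) ∨ (d i = false ∧ A (w (i + 1)) (w i))) ∧
      (∀ i, 0 < i → i < n → (d (i - 1) = true ∨ d i = true)) ∧
      (s.2 = true → 0 < n → d 0 = true) ∧
      (t.2 = false → 0 < n → d (n - 1) = true) ∧
      (n = 0 → s.2 = true → t.2 = true) := by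
  induction h using Relation.ReflTransGen.head_induction_on with
  | refl =>
    refine ⟨0, fun _ => t.1, fun _ => true, rfl, rfl, ?_, ?_, ?_, ?_, ?_⟩
    · intro i hi; omega
    · intro i h1 h2; omega
    · intro _ h; omega
    · intro _ h; omega
    · intro _ h; exact h
  | @head x c hR hQ ih =>
    obtain ⟨n, w, d, hw0, hwn, harc, hint, hstart, hend, hzero⟩ := ih
    rcases hR with ⟨hs2, hc2, hAa⟩ | ⟨hs2, hc2, hAa⟩ | ⟨hs2, hc2, heq⟩
    · -- forward eq-edge : prepend, new first direction = true
      refine ⟨n + 1, fun i => if i = 0 then x.1 else w (i - 1),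
        fun i => if i = 0 then true else d (i - 1), by simp, ?_, ?_, ?_, ?_, ?_, ?_⟩
      · simp only [if_neg (by omega : ¬ (n + 1 = 0))]
        simpa using hwn
      · intro i hi
        rcases Nat.eq_zero_or_pos i with h0 | h0
        · subst h0
          left
          refine ⟨if_pos rfl, ?_⟩
          simp only [if_pos rfl, if_neg (by omega : ¬ (0 + 1 = 0))]
          simpa [hw0] using hAa
        · have e0 : ¬ (i = 0) := by omega
          have e1 : ¬ (i + 1 = 0) := by omega
          simp only [if_neg e0, if_neg e1]
          have := harc (i - 1) (by omega)
          rw [show i - 1 + 1 = i + 1 - 1 from by omega] at this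
          exact this
      · intro i h0 hi
        by_cases h1 : i = 1
        · subst h1; left; simp
        · have e0 : ¬ (i = 0) := by omega
          have e1 : ¬ (i - 1 = 0) := by omega
          simp only [if_neg e0, if_neg e1]
          exact hint (i - 1) (by omega) (by omega)
      · intro _ _
        exact if_pos rfl
      · intro ht _
        rcases Nat.eq_zero_or_pos n with h0 | h0
        · subst h0; simp
        · simp only [Nat.add_sub_cancel, if_neg (by omega : ¬ (n = 0))]
          exact hend ht h0
      · intro h; omega
    · -- backward eq-edge : prepend, new first direction = false
      refine ⟨n + 1, fun i => if i = 0 then x.1 else w (i - 1),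
        fun i => if i = 0 then false else d (i - 1), by simp, ?_, ?_, ?_, ?_, ?_, ?_⟩
      · simp only [if_neg (by omega : ¬ (n + 1 = 0))]
        simpa using hwn
      · intro i hi
        rcases Nat.eq_zero_or_pos i with h0 | h0
        · subst h0
          right
          refine ⟨if_pos rfl, ?_⟩
          simp only [if_pos rfl, if_neg (by omega : ¬ (0 + 1 = 0))]
          simpa [hw0] using hAa
        · have e0 : ¬ (i = 0) := by omega
          have e1 : ¬ (i + 1 = 0) := by omega
          simp only [if_neg e0, if_neg e1]
          have := harc (i - 1) (by omega)
          rw [show i - 1 + 1 = i + 1 - 1 from by omega] at this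
          exact this
      · intro i h0 hi
        by_cases h1 : i = 1
        · subst h1
          right
          simp only [if_neg (by omega : ¬ (1 = 0))]
          exact hstart hc2 (by omega)
        · have e0 : ¬ (i = 0) := by omega
          have e1 : ¬ (i - 1 = 0) := by omega
          simp only [if_neg e0, if_neg e1]
          exact hint (i - 1) (by omega) (by omega)
      · intro h _
        rw [hs2] at h
        exact absurd h (by simp)
      · intro ht _
        rcases Nat.eq_zero_or_pos n with h0 | h0
        · exfalso
          have := hzero h0 hc2
          rw [ht] at this
          exact absurd this (by simp)
        · simp only [Nat.add_sub_cancel, if_neg (by omega : ¬ (n = 0))]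
          exact hend ht h0
      · intro h; omega
    · -- strict edge : reuse the walk
      refine ⟨n, w, d, ?_, hwn, harc, hint, ?_, hend, ?_⟩
      · rw [hw0]; exact heq.symm
      · intro h _
        rw [hs2] at h
        exact absurd h (by simp)
      · intro _ h
        rw [hs2] at h
        exact absurd h (by simp)

lemma labeling_of_no_badwalk {V : Type*} [Fintype V] {A : V → V → Prop}
    (hA : ∀ u v, A u v → ¬ A v u) (hnw : ¬ BadWalk A) :
    ∃ ℓ : V → V → ℝ, IsHomogeneousArcLabeling A ℓ := by
  classical
  set Q : V × Bool → V × Bool → Prop := Relation.ReflTransGen (SlotRel A) with hQdef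
  have hnoback : ∀ x : V, ¬ Q (x, true) (x, false) := by
    intro x hq
    obtain ⟨n, w, d, hw0, hwn, harc, hint, hstart, hend, hzero⟩ := slot_chain hq
    replace hw0 : w 0 = x := hw0
    replace hwn : w n = x := hwn
    replace hstart : true = true → 0 < n → d 0 = true := hstart
    replace hend : false = false → 0 < n → d (n - 1) = true := hend
    replace hzero : n = 0 → true = true → false = true := hzero
    have hn0 : n ≠ 0 := by
      intro h
      exact absurd (hzero h rfl) (by simp)
    have hnpos : 0 < n := Nat.pos_of_ne_zero hn0
    have hd0 : d 0 = true := hstart rfl hnpos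
    have hdl : d (n - 1) = true := hend rfl hnpos
    apply hnw
    haveI : NeZero n := ⟨hn0⟩
    have hstepb : ∀ i : ZMod n, w ((i + 1 : ZMod n)).val = w (i.val + 1) := by
      intro i
      rw [zmod_val_add_one hnpos]
      by_cases h : i.val = n - 1
      · rw [if_pos h, h, hw0, show n - 1 + 1 = n from by omega, hwn]
      · rw [if_neg h]
    refine ⟨n, hnpos, fun i : ZMod n => w i.val, ?_, ?_, ?_⟩
    · intro i
      rcases harc i.val (ZMod.val_lt i) with ⟨-, ha⟩ | ⟨-, ha⟩
      · left
        show A (w i.val) (w ((i + 1 : ZMod n)).val)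
        rw [hstepb]
        exact ha
      · right
        show A (w ((i + 1 : ZMod n)).val) (w i.val)
        rw [hstepb]
        exact ha
    · refine ⟨0, ?_, ?_⟩
      · show A (w ((0 - 1 : ZMod n)).val) (w ((0 : ZMod n)).val)
        have h1 : ((0 - 1 : ZMod n)).val = n - 1 := by
          rw [zmod_val_sub_one hnpos]
          simp
        rw [h1, ZMod.val_zero, hw0, ← hwn]
        rcases harc (n - 1) (by omega) with ⟨-, ha⟩ | ⟨hd, -⟩
        · rw [show n - 1 + 1 = n from by omega] at ha
          exact ha
        · rw [hdl] at hd
          exact absurd hd (by simp)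
      · show A (w ((0 : ZMod n)).val) (w ((0 + 1 : ZMod n)).val)
        rw [hstepb, ZMod.val_zero]
        rcases harc 0 hnpos with ⟨-, ha⟩ | ⟨hd, -⟩
        · exact ha
        · rw [hd0] at hd
          exact absurd hd (by simp)
    · rintro ⟨j, hb1, hb2⟩
      have hb1' : A (w (j.val + 1)) (w j.val) := by
        have e := hstepb j
        simp only at hb1
        rwa [e] at hb1
      have hdj : d j.val = false := by
        rcases harc j.val (ZMod.val_lt j) with ⟨-, ha⟩ | ⟨hd, -⟩
        · exact absurd hb1' (hA _ _ ha)
        · exact hd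
      have hb2' : A (w ((j - 1).val + 1)) (w ((j - 1).val)) := by
        have e := hstepb (j - 1)
        rw [sub_add_cancel] at e
        simp only at hb2
        rwa [e] at hb2
      have hdj1 : d ((j - 1).val) = false := by
        rcases harc ((j - 1).val) (ZMod.val_lt _) with ⟨-, ha⟩ | ⟨hd, -⟩
        · exact absurd hb2' (hA _ _ ha)
        · exact hd
      by_cases h0 : j.val = 0
      · have e : (j - 1).val = n - 1 := by
          rw [zmod_val_sub_one hnpos, if_pos h0]
        rw [e, hdl] at hdj1
        exact absurd hdj1 (by simp)
      · have e : (j - 1).val = j.val - 1 := by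
          rw [zmod_val_sub_one hnpos, if_neg h0]
        rw [e] at hdj1
        rcases hint j.val (by omega) (ZMod.val_lt j) with h | h
        · rw [hdj1] at h
          exact absurd h (by simp)
        · rw [hdj] at h
          exact absurd h (by simp)
  let f : V × Bool → ℕ := fun s => (Finset.univ.filter fun u => Q u s).card
  have hQ_le : ∀ {s t : V × Bool}, Q s t → f s ≤ f t := by
    intro s t hst
    apply Finset.card_le_card
    intro x hx
    simp only [Finset.mem_filter, Finset.mem_univ, true_and] at hx ⊢
    exact hx.trans hst
  have hQ_eq : ∀ {s t : V × Bool}, Q s t → Q t s → f s = f t :=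
    fun h h' => le_antisymm (hQ_le h) (hQ_le h')
  have hstrictf : ∀ x : V, (∃ u, A u x) → (∃ u, A x u) → f (x, false) < f (x, true) := by
    intro x hin hout
    apply Finset.card_lt_card
    rw [Finset.ssubset_iff_of_subset]
    · refine ⟨(x, true), ?_, ?_⟩
      · simp only [Finset.mem_filter, Finset.mem_univ, true_and]
        exact Relation.ReflTransGen.refl
      · simp only [Finset.mem_filter, Finset.mem_univ, true_and]
        exact hnoback x
    · intro y hy
      simp only [Finset.mem_filter, Finset.mem_univ, true_and] at hy ⊢
      exact hy.trans (Relation.ReflTransGen.single (Or.inr (Or.inr ⟨rfl, rfl, rfl⟩)))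
  refine ⟨fun u v => (f (u, true) : ℝ), ?_, ?_, ?_⟩
  · intro u v w _ _
    rfl
  · intro u v w huv hwv
    have q1 : Q (u, true) (v, false) :=
      Relation.ReflTransGen.single (Or.inl ⟨rfl, rfl, huv⟩)
    have q1' : Q (v, false) (u, true) :=
      Relation.ReflTransGen.single (Or.inr (Or.inl ⟨rfl, rfl, huv⟩))
    have q2 : Q (w, true) (v, false) :=
      Relation.ReflTransGen.single (Or.inl ⟨rfl, rfl, hwv⟩)
    have q2' : Q (v, false) (w, true) :=
      Relation.ReflTransGen.single (Or.inr (Or.inl ⟨rfl, rfl, hwv⟩))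
    show ((f (u, true) : ℕ) : ℝ) = ((f (w, true) : ℕ) : ℝ)
    exact_mod_cast hQ_eq (q1.trans q2') (q2.trans q1')
  · intro u v w huv hvw
    have q1 : Q (u, true) (v, false) :=
      Relation.ReflTransGen.single (Or.inl ⟨rfl, rfl, huv⟩)
    have q1' : Q (v, false) (u, true) :=
      Relation.ReflTransGen.single (Or.inr (Or.inl ⟨rfl, rfl, huv⟩))
    have e1 : f (u, true) = f (v, false) := hQ_eq q1 q1'
    have e2 : f (v, false) < f (v, true) := hstrictf v ⟨u, huv⟩ ⟨w, hvw⟩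
    have h : f (u, true) < f (v, true) := e1 ▸ e2
    show ((f (u, true) : ℕ) : ℝ) < ((f (v, true) : ℕ) : ℝ)
    exact_mod_cast h


/-- An orientation of a (finite) graph admits a homogeneous arc labeling iff it has
no badly oriented cycle. -/
theorem stmt5 {V : Type*} [Fintype V] (A : V → V → Prop)
    (hA : ∀ u v, A u v → ¬ A v u) :
    (∃ ℓ : V → V → ℝ, IsHomogeneousArcLabeling A ℓ) ↔ ¬ HasBadlyOrientedCycle A := by
  constructor
  · rintro ⟨ℓ, hℓ⟩ hbad
    obtain ⟨n, hn3, v, hinj, hadj, hff, hnb⟩ := hbad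
    exact no_badwalk_of_labeling hA hℓ ⟨n, by omega, v, hadj, hff, hnb⟩
  · intro hcyc
    exact labeling_of_no_badwalk hA fun hw => by
      obtain ⟨n, hn, v, h1, h2, h3⟩ := hw
      exact hcyc (badwalk_aux hA n hn v h1 h2 h3)
end

section
/- The 5-cycle C_5 admits an orientation with a homogeneous arc labeling; consequently, every graph with a homomorphism into C_5 (in particular every graph with circular chromatic number at most 5/2) admits an orientation with a homogeneous arc labeling. -/
def IsOrientation {V : Type*} (G : SimpleGraph V) (A : V → V → Prop) : Prop :=
  (∀ u v, G.Adj u v ↔ (A u v ∨ A v u)) ∧ (∀ u v, A u v → ¬ A v u)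

/-- The 5-cycle. -/
def C5 : SimpleGraph (ZMod 5) := SimpleGraph.fromRel (fun i j => j = i + 1)

/-- An orientation of `C₅`: arcs 0→1, 1→2, 3→2, 4→3, 4→0. -/
def A5 : ZMod 5 → ZMod 5 → Prop := fun i j =>
  (i = 0 ∧ j = 1) ∨ (i = 1 ∧ j = 2) ∨ (i = 3 ∧ j = 2) ∨ (i = 4 ∧ j = 3) ∨ (i = 4 ∧ j = 0)

noncomputable def ℓ5 : ZMod 5 → ZMod 5 → ℝ := fun u _ =>
  if u = 4 then 0 else if u = 0 then 1 else 2

lemma A5_orientation : IsOrientation C5 A5 := by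
  constructor
  · unfold C5 A5
    simp only [SimpleGraph.fromRel_adj]
    decide
  · unfold A5
    decide

lemma ℓ5_homog : IsHomogeneousArcLabeling A5 ℓ5 := by
  refine ⟨fun u v w _ _ => rfl, ?_, ?_⟩
  · intro u v w huv hwv
    rcases huv with ⟨hu, hv⟩ | ⟨hu, hv⟩ | ⟨hu, hv⟩ | ⟨hu, hv⟩ | ⟨hu, hv⟩ <;>
      rcases hwv with ⟨hw, hv'⟩ | ⟨hw, hv'⟩ | ⟨hw, hv'⟩ | ⟨hw, hv'⟩ | ⟨hw, hv'⟩ <;>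
      subst hu <;> subst hw <;> simp_all (config := { decide := true }) [ℓ5]
  · intro u v w huv hvw
    rcases huv with ⟨hu, hv⟩ | ⟨hu, hv⟩ | ⟨hu, hv⟩ | ⟨hu, hv⟩ | ⟨hu, hv⟩ <;>
      rcases hvw with ⟨hv', hw⟩ | ⟨hv', hw⟩ | ⟨hv', hw⟩ | ⟨hv', hw⟩ | ⟨hv', hw⟩ <;>
      subst hu <;> subst hv <;> simp_all (config := { decide := true }) [ℓ5]

/-- `C₅` admits an orientation with a homogeneous arc labeling; consequently every
graph admitting a homomorphism into `C₅` (in particular every graph of circular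
chromatic number at most `5/2`) admits an orientation with a homogeneous arc
labeling. -/
theorem stmt10 {V : Type*} (G : SimpleGraph V) :
    (∃ (A : ZMod 5 → ZMod 5 → Prop) (ℓ : ZMod 5 → ZMod 5 → ℝ),
      IsOrientation C5 A ∧ IsHomogeneousArcLabeling A ℓ) ∧
    (∀ _γ : G →g C5, ∃ (A : V → V → Prop) (ℓ : V → V → ℝ),
      IsOrientation G A ∧ IsHomogeneousArcLabeling A ℓ) := by
  refine ⟨⟨A5, ℓ5, A5_orientation, ℓ5_homog⟩, fun γ => ?_⟩
  refine ⟨fun u v => G.Adj u v ∧ A5 (γ u) (γ v), fun u v => ℓ5 (γ u) (γ v), ⟨?_, ?_⟩, ?_, ?_, ?_⟩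
  · intro u v
    constructor
    · intro h
      rcases (A5_orientation.1 (γ u) (γ v)).1 (γ.map_adj h) with h' | h'
      · exact Or.inl ⟨h, h'⟩
      · exact Or.inr ⟨h.symm, h'⟩
    · rintro (⟨h, _⟩ | ⟨h, _⟩)
      · exact h
      · exact h.symm
  · rintro u v ⟨_, h⟩ ⟨_, h'⟩
    exact A5_orientation.2 _ _ h h'
  · rintro u v w ⟨_, h⟩ ⟨_, h'⟩
    exact ℓ5_homog.1 _ _ _ h h'
  · rintro u v w ⟨_, h⟩ ⟨_, h'⟩
    exact ℓ5_homog.2.1 _ _ _ h h'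
  · rintro u v w ⟨_, h⟩ ⟨_, h'⟩
    exact ℓ5_homog.2.2 _ _ _ h h'
end

section
/- Let G' be obtained from an oriented graph G (with no badly oriented cycle) by the following operation: take a source u with out-neighbors v_1,...,v_n, suppose some v_i has another in-neighbor u', delete u, and add all arcs u'v_1,...,u'v_n that are missing. Then G' has no badly oriented cycle. -/
lemma gen_cycle {V : Type*} (A : V → V → Prop) (L : ℕ) (hL : 3 ≤ L) (W : ℕ → V)
    (hper : ∀ t, W (t + L) = W t)
    (hinj : ∀ t₁ t₂, t₁ < L → t₂ < L → W t₁ = W t₂ → t₁ = t₂)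
    (harc : ∀ t, t < L → A (W t) (W (t+1)) ∨ A (W (t+1)) (W t))
    (hFF : ∃ r, 1 ≤ r ∧ r ≤ L ∧ A (W (r-1)) (W r) ∧ A (W r) (W (r+1)))
    (hBB : ∀ r, 1 ≤ r → r ≤ L → ¬(A (W (r+1)) (W r) ∧ A (W r) (W (r-1)))) :
    HasBadlyOrientedCycle A := by
  haveI : NeZero L := ⟨by omega⟩
  haveI : Fact (1 < L) := ⟨by omega⟩
  have hmodW : ∀ a, W (a % L) = W a := by
    intro a
    induction a using Nat.strong_induction_on with
    | _ a ih =>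
      rcases lt_or_ge a L with h | h
      · rw [Nat.mod_eq_of_lt h]
      · have ha : a = (a - L) + L := by omega
        rw [ha, Nat.add_mod_right, ih (a - L) (by omega), hper]
  -- index translation helpers
  have key : ∀ r : ℕ, 1 ≤ r → r ≤ L →
      W ((r : ZMod L)).val = W r ∧ W ((r : ZMod L) + 1).val = W (r+1) ∧
      W ((r : ZMod L) - 1).val = W (r-1) := by
    intro r h1 h2
    refine ⟨?_, ?_, ?_⟩
    · rw [ZMod.val_natCast, hmodW]
    · have : ((r : ZMod L) + 1) = ((r + 1 : ℕ) : ZMod L) := by push_cast; ring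
      rw [this, ZMod.val_natCast, hmodW]
    · have : ((r : ZMod L) - 1) = ((r - 1 : ℕ) : ZMod L) := by
        have : (r : ℕ) = (r - 1) + 1 := by omega
        rw [this]; push_cast; ring
      rw [this, ZMod.val_natCast, Nat.mod_eq_of_lt (by omega)]
  refine ⟨L, hL, fun j => W j.val, ?_, ?_, ?_, ?_⟩
  · intro a b hab
    exact ZMod.val_injective L (hinj a.val b.val a.val_lt b.val_lt hab)
  · intro i
    have h := harc i.val i.val_lt
    have h2 : W ((i + 1 : ZMod L)).val = W (i.val + 1) := by
      rw [ZMod.val_add, ZMod.val_one, hmodW]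
    show A (W i.val) (W ((i + 1 : ZMod L)).val) ∨ A (W ((i + 1 : ZMod L)).val) (W i.val)
    rw [h2]; exact h
  · obtain ⟨r, h1, h2, hf1, hf2⟩ := hFF
    obtain ⟨k1, k2, k3⟩ := key r h1 h2
    refine ⟨(r : ZMod L), ?_, ?_⟩
    · show A (W ((r : ZMod L) - 1).val) (W ((r : ZMod L)).val)
      rw [k3, k1]; exact hf1
    · show A (W ((r : ZMod L)).val) (W ((r : ZMod L) + 1).val)
      rw [k1, k2]; exact hf2
  · rintro ⟨j, hb1, hb2⟩
    simp only at hb1 hb2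
    obtain ⟨r, h1, h2, hjr⟩ : ∃ r, 1 ≤ r ∧ r ≤ L ∧ ((r : ZMod L) = j) := by
      by_cases h0 : j.val = 0
      · exact ⟨L, by omega, le_rfl, by
          rw [ZMod.natCast_self]; exact ((ZMod.val_eq_zero j).mp h0).symm⟩
      · exact ⟨j.val, by omega, le_of_lt j.val_lt, ZMod.natCast_rightInverse j⟩
    obtain ⟨k1, k2, k3⟩ := key r h1 h2
    rw [hjr] at k1 k2 k3
    exact hBB r h1 h2 ⟨by rw [← k2, ← k1]; exact hb1, by rw [← k1, ← k3]; exact hb2⟩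

lemma seg1_cycle {V : Type*} (A : V → V → Prop) (n : ℕ) (P : ℕ → V) (z : V) (a b : ℕ)
    (ha : 1 ≤ a) (hab : a + 1 ≤ b) (hb : b < n)
    (hPinj : ∀ t₁ t₂, t₁ < n → t₂ < n → P t₁ = P t₂ → t₁ = t₂)
    (hz : ∀ t, a ≤ t → t ≤ b → P t ≠ z)
    (hfirst : A z (P a))
    (hlast : A z (P b) ∨ A (P b) z)
    (hint : ∀ t, a ≤ t → t < b → (A (P t) (P (t+1)) ∨ A (P (t+1)) (P t)))
    (hFF : A (P a) (P (a+1)) ∨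
      (∃ t, a < t ∧ t < b ∧ A (P (t-1)) (P t) ∧ A (P t) (P (t+1))) ∨ A (P b) z)
    (hBB1 : ¬ A (P a) z)
    (hBBint : ∀ t, a < t → t < b → ¬(A (P (t+1)) (P t) ∧ A (P t) (P (t-1))))
    (hBBlast : ¬ (A z (P b) ∧ A (P b) (P (b-1)))) :
    HasBadlyOrientedCycle A := by
  set L := b - a + 2 with hLdef
  have hL : 3 ≤ L := by omega
  set f : ℕ → V := fun t => if t = 0 then z else P (a + t - 1) with hfdef
  set W : ℕ → V := fun t => f (t % L) with hWdef
  have hWlt : ∀ t, t < L → W t = f t := by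
    intro t ht; simp only [hWdef, Nat.mod_eq_of_lt ht]
  have hW0 : W 0 = z := by rw [hWlt 0 (by omega)]; simp [hfdef]
  have hWL : W L = z := by simp only [hWdef, Nat.mod_self]; simp [hfdef]
  have hWL1 : W (L + 1) = f 1 := by
    simp only [hWdef, Nat.add_mod_left, Nat.mod_eq_of_lt (show 1 < L by omega)]
  have hfP : ∀ t, 1 ≤ t → t ≤ L - 1 → f t = P (a + t - 1) := by
    intro t h1 h2; simp only [hfdef]; rw [if_neg (by omega)]
  have hWP : ∀ t, 1 ≤ t → t ≤ L - 1 → W t = P (a + t - 1) := by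
    intro t h1 h2; rw [hWlt t (by omega), hfP t h1 h2]
  have hWa : W 1 = P a := by rw [hWP 1 (by omega) (by omega)]; congr 1
  have hWb : W (L - 1) = P b := by rw [hWP (L-1) (by omega) (by omega)]; congr 1; omega
  apply gen_cycle A L hL W
  · intro t; simp only [hWdef, Nat.add_mod_right]
  · intro t₁ t₂ h₁ h₂ heq
    rw [hWlt t₁ h₁, hWlt t₂ h₂] at heq
    simp only [hfdef] at heq
    by_cases e₁ : t₁ = 0 <;> by_cases e₂ : t₂ = 0
    · omega
    · rw [if_pos e₁, if_neg e₂] at heq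
      exact absurd heq.symm (hz (a + t₂ - 1) (by omega) (by omega))
    · rw [if_neg e₁, if_pos e₂] at heq
      exact absurd heq (hz (a + t₁ - 1) (by omega) (by omega))
    · rw [if_neg e₁, if_neg e₂] at heq
      have := hPinj _ _ (by omega) (by omega) heq
      omega
  · intro t ht
    by_cases h0 : t = 0
    · subst h0
      rw [hW0, show (0:ℕ)+1 = 1 from rfl, hWa]
      exact Or.inl hfirst
    by_cases hl : t = L - 1
    · subst hl
      rw [hWb, show L - 1 + 1 = L by omega, hWL]
      exact Or.symm hlast
    · rw [hWP t (by omega) (by omega), hWP (t+1) (by omega) (by omega)]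
      have := hint (a + t - 1) (by omega) (by omega)
      rw [show a + t - 1 + 1 = a + (t+1) - 1 by omega] at this
      exact this
  · rcases hFF with h | ⟨t, ht1, ht2, hf1, hf2⟩ | h
    · refine ⟨1, le_rfl, by omega, ?_, ?_⟩
      · rw [show (1:ℕ) - 1 = 0 from rfl, hW0, hWa]; exact hfirst
      · rw [hWa, hWP 2 (by omega) (by omega), show a + 2 - 1 = a + 1 by omega]; exact h
    · refine ⟨t - a + 1, by omega, by omega, ?_, ?_⟩
      · rw [show t - a + 1 - 1 = t - a by omega, hWP (t-a) (by omega) (by omega),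
          hWP (t-a+1) (by omega) (by omega), show a + (t-a) - 1 = t - 1 by omega,
          show a + (t-a+1) - 1 = t by omega]
        exact hf1
      · rw [hWP (t-a+1) (by omega) (by omega), hWP (t-a+1+1) (by omega) (by omega),
          show a + (t-a+1) - 1 = t by omega, show a + (t-a+1+1) - 1 = t + 1 by omega]
        exact hf2
    · refine ⟨L, by omega, le_rfl, ?_, ?_⟩
      · rw [hWb, hWL]; exact h
      · rw [hWL, hWL1, hfP 1 le_rfl (by omega), show a + 1 - 1 = a by omega]
        exact hfirst
  · intro r h1 h2 hcon
    obtain ⟨hc1, hc2⟩ := hcon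
    by_cases e1 : r = 1
    · subst e1
      rw [show (1:ℕ) - 1 = 0 from rfl, hW0, hWa] at hc2
      exact hBB1 hc2
    by_cases eL : r = L
    · subst eL
      rw [hWL1, hWL, hfP 1 le_rfl (by omega), show a + 1 - 1 = a by omega] at hc1
      exact hBB1 hc1
    by_cases eL1 : r = L - 1
    · subst eL1
      rw [show L - 1 + 1 = L by omega, hWL, hWb] at hc1
      rw [hWb, hWP (L-1-1) (by omega) (by omega),
        show a + (L - 1 - 1) - 1 = b - 1 by omega] at hc2
      exact hBBlast ⟨hc1, hc2⟩
    · rw [hWP (r+1) (by omega) (by omega), hWP r (by omega) (by omega)] at hc1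
      rw [hWP r (by omega) (by omega), hWP (r-1) (by omega) (by omega)] at hc2
      refine hBBint (a + r - 1) (by omega) (by omega) ⟨?_, ?_⟩
      · rw [show a + r - 1 + 1 = a + (r+1) - 1 by omega]; exact hc1
      · rw [show a + r - 1 - 1 = a + (r-1) - 1 by omega]; exact hc2

/-- Let `A` be an oriented graph with no badly oriented cycle, let `u` be a source,
and suppose some out-neighbor `vi` of `u` has another in-neighbor `u' ≠ u`. Then the
oriented graph obtained by deleting `u` and adding all missing arcs from `u'` to the
out-neighbors of `u` has no badly oriented cycle. -/
theorem stmt14 {V : Type*} (A : V → V → Prop)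
    (hasym : ∀ x y, A x y → ¬ A y x)
    (hA : ¬ HasBadlyOrientedCycle A)
    (u u' vi : V)
    (hsource : ∀ w, ¬ A w u)
    (h1 : A u vi) (h2 : A u' vi) (hne : u' ≠ u) :
    ¬ HasBadlyOrientedCycle
      (fun x y => (A x y ∧ x ≠ u ∧ y ≠ u) ∨ (x = u' ∧ A u y)) := by
  set A' : V → V → Prop := fun x y => (A x y ∧ x ≠ u ∧ y ≠ u) ∨ (x = u' ∧ A u y)
    with hA'def
  intro hbad
  have hirr : ∀ x, ¬ A x x := fun x hx => hasym x x hx hx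
  have hA'elim : ∀ x y, A' x y → (A x y ∧ x ≠ u ∧ y ≠ u) ∨ (x = u' ∧ A u y) := by
    intro x y h; simp only [hA'def] at h; exact h
  have hA'intro : ∀ x y, ((A x y ∧ x ≠ u ∧ y ≠ u) ∨ (x = u' ∧ A u y)) → A' x y := by
    intro x y h; simp only [hA'def]; exact h
  have hA'ne : ∀ x y, A' x y → x ≠ u ∧ y ≠ u := by
    intro x y h
    rcases hA'elim x y h with ⟨_, hx, hy⟩ | ⟨hx, hy⟩
    · exact ⟨hx, hy⟩
    · exact ⟨hx ▸ hne, fun h' => hirr u (h' ▸ hy)⟩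
  have hgen : ∀ x y, A' x y → x ≠ u' → A x y := by
    intro x y h hx
    rcases hA'elim x y h with ⟨h', _, _⟩ | ⟨hx', _⟩
    · exact h'
    · exact absurd hx' hx
  have hlift : ∀ x y, A x y → x ≠ u → y ≠ u → A' x y :=
    fun x y h hx hy => hA'intro x y (Or.inl ⟨h, hx, hy⟩)
  have hu'arc : ∀ y, A' u' y → A u' y ∨ A u y := by
    intro y h
    rcases hA'elim u' y h with ⟨h', _, _⟩ | ⟨_, h'⟩
    · exact Or.inl h'
    · exact Or.inr h'
  have hviu : vi ≠ u := fun h => hirr u (h ▸ h1)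
  have hviu' : vi ≠ u' := fun h => hirr u' (h ▸ h2)
  -- the key 4-cycle lemma
  have hL4 : ∀ w, A u w → A w u' → False := by
    intro w huw hwu'
    have hwvi : w ≠ vi := fun h => hasym u' vi h2 (h ▸ hwu')
    have hwu : w ≠ u := fun h => hirr u (h ▸ huw)
    have hwu'2 : w ≠ u' := fun h => hirr u' (h ▸ hwu')
    apply hA
    set g4 : ℕ → V := fun t => if t = 0 then w else if t = 1 then u' else
      if t = 2 then vi else u with hg4
    set W4 : ℕ → V := fun t => g4 (t % 4) with hW4
    have ev : ∀ t, t < 4 → W4 t = g4 t := by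
      intro t ht; simp only [hW4, Nat.mod_eq_of_lt ht]
    have e0 : W4 0 = w := by rw [ev 0 (by omega)]; simp [hg4]
    have e1 : W4 1 = u' := by rw [ev 1 (by omega)]; simp [hg4]
    have e2 : W4 2 = vi := by rw [ev 2 (by omega)]; simp [hg4]
    have e3 : W4 3 = u := by rw [ev 3 (by omega)]; simp [hg4]
    have e4 : W4 4 = w := by simp only [hW4, Nat.mod_self]; simp [hg4]
    have e5 : W4 5 = u' := by
      simp only [hW4, show 5 % 4 = 1 by norm_num]; simp [hg4]
    apply gen_cycle A 4 (by omega) W4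
    · intro t; simp only [hW4, Nat.add_mod_right]
    · intro t₁ t₂ ht₁ ht₂ heq
      rw [ev t₁ ht₁, ev t₂ ht₂] at heq
      have key4 : ∀ a b, a < b → b < 4 → g4 a ≠ g4 b := by
        intro a b hab hb4
        interval_cases b <;> interval_cases a <;> simp only [hg4] <;> norm_num
        · exact hwu'2
        · exact hwvi
        · exact fun h => hviu' h.symm
        · exact hwu
        · exact hne
        · exact hviu
      rcases Nat.lt_trichotomy t₁ t₂ with h | h | h
      · exact absurd heq (key4 t₁ t₂ h ht₂)
      · exact h
      · exact absurd heq.symm (key4 t₂ t₁ h ht₁)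
    · intro t ht
      interval_cases t
      · rw [e0, e1]; exact Or.inl hwu'
      · rw [e1, e2]; exact Or.inl h2
      · rw [e2, e3]; exact Or.inr h1
      · rw [e3, e4]; exact Or.inl huw
    · exact ⟨1, by omega, by omega, by rw [show (1:ℕ)-1 = 0 from rfl, e0, e1]; exact hwu',
        by rw [e1, e2]; exact h2⟩
    · intro r hr1 hr4 hcon
      obtain ⟨c1, c2⟩ := hcon
      interval_cases r
      · rw [e2, e1] at c1; exact hasym u' vi h2 c1
      · rw [e2, e1] at c2; exact hasym u' vi h2 c2
      · rw [e4, e3] at c1; exact hsource w c1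
      · rw [e4, e3] at c2; exact hsource w c2
  -- extract the bad cycle
  obtain ⟨n, hn, v, hvinj, hvarc, hvFF, hvBB⟩ := hbad
  haveI : NeZero n := ⟨by omega⟩
  by_cases hkex : ∃ k, v k = u'
  case neg =>
    -- u' not on the cycle : direct transfer
    push_neg at hkex
    apply hA
    have hvne : ∀ i, v i ≠ u := by
      intro i
      rcases hvarc i with h | h
      · exact (hA'ne _ _ h).1
      · exact (hA'ne _ _ h).2
    refine ⟨n, hn, v, hvinj, ?_, ?_, ?_⟩
    · intro i
      rcases hvarc i with h | h
      · exact Or.inl (hgen _ _ h (hkex i))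
      · exact Or.inr (hgen _ _ h (hkex (i+1)))
    · obtain ⟨i, c1, c2⟩ := hvFF
      exact ⟨i, hgen _ _ c1 (hkex (i-1)), hgen _ _ c2 (hkex i)⟩
    · rintro ⟨j, c1, c2⟩
      exact hvBB ⟨j, hlift _ _ c1 (hvne _) (hvne _), hlift _ _ c2 (hvne _) (hvne _)⟩
  case pos =>
  obtain ⟨k, hk⟩ := hkex
  set P : ℕ → V := fun t => v (k + (t : ZMod n)) with hPdef
  have hper : ∀ t, P (t + n) = P t := by
    intro t; simp only [hPdef]; congr 1; push_cast; simp
  have hP0 : P 0 = u' := by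
    simp only [hPdef, Nat.cast_zero, add_zero]; exact hk
  have hPn : P n = u' := by rw [show n = 0 + n by omega, hper, hP0]
  have hsucc : ∀ t : ℕ, k + ((t + 1 : ℕ) : ZMod n) = (k + (t : ZMod n)) + 1 := by
    intro t; push_cast; ring
  have hstep : ∀ t, A' (P t) (P (t+1)) ∨ A' (P (t+1)) (P t) := by
    intro t
    have h := hvarc (k + (t : ZMod n))
    simp only [hPdef, hsucc]
    exact h
  have hPinj : ∀ t₁ t₂, t₁ < n → t₂ < n → P t₁ = P t₂ → t₁ = t₂ := by
    intro t₁ t₂ ht₁ ht₂ heq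
    simp only [hPdef] at heq
    have h3 : (t₁ : ZMod n) = t₂ := add_left_cancel (hvinj heq)
    have h4 := congrArg ZMod.val h3
    rwa [ZMod.val_natCast, ZMod.val_natCast, Nat.mod_eq_of_lt ht₁,
      Nat.mod_eq_of_lt ht₂] at h4
  have hPu : ∀ t, P t ≠ u := by
    intro t
    rcases hstep t with h | h
    · exact (hA'ne _ _ h).1
    · exact (hA'ne _ _ h).2
  have hPne0 : ∀ t, 1 ≤ t → t < n → P t ≠ u' := by
    intro t h1' h2' heq
    have := hPinj t 0 h2' (by omega) (heq.trans hP0.symm)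
    omega
  have hgenP : ∀ t y, 1 ≤ t → t < n → A' (P t) y → A (P t) y :=
    fun t y ha hb h => hgen _ _ h (hPne0 t ha hb)
  have hliftP : ∀ t s, A (P t) (P s) → A' (P t) (P s) :=
    fun t s h => hlift _ _ h (hPu t) (hPu s)
  have hPBB : ∀ r, 1 ≤ r → ¬(A' (P (r+1)) (P r) ∧ A' (P r) (P (r-1))) := by
    rintro r hr ⟨c1, c2⟩
    apply hvBB
    refine ⟨k + (r : ZMod n), ?_, ?_⟩
    · have e : k + (r : ZMod n) + 1 = k + ((r + 1 : ℕ) : ZMod n) := by push_cast; ring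
      rw [e]; exact c1
    · have e : k + (r : ZMod n) - 1 = k + ((r - 1 : ℕ) : ZMod n) := by
        rw [show (r : ℕ) = (r - 1) + 1 by omega]; push_cast; ring
      rw [e]; exact c2
  have hBBP : ∀ t, 1 ≤ t → ¬(A (P (t+1)) (P t) ∧ A (P t) (P (t-1))) :=
    fun t ht h => hPBB t ht ⟨hliftP _ _ h.1, hliftP _ _ h.2⟩
  obtain ⟨r0, hr01, hr0n, hFFa, hFFb⟩ :
      ∃ r, 1 ≤ r ∧ r ≤ n ∧ A' (P (r-1)) (P r) ∧ A' (P r) (P (r+1)) := by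
    obtain ⟨i, hi1, hi2⟩ := hvFF
    obtain ⟨r, hr1, hrn, hkr⟩ : ∃ r, 1 ≤ r ∧ r ≤ n ∧ k + (r : ZMod n) = i := by
      by_cases h0 : (i - k).val = 0
      · refine ⟨n, by omega, le_rfl, ?_⟩
        have : i - k = 0 := (ZMod.val_eq_zero _).mp h0
        have hik : i = k := by
          have := sub_eq_zero.mp this; exact this
        rw [ZMod.natCast_self, add_zero, hik]
      · refine ⟨(i - k).val, by omega, le_of_lt (ZMod.val_lt _), ?_⟩
        rw [ZMod.natCast_rightInverse (i - k)]; ring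
    have e1 : P r = v i := by simp only [hPdef]; rw [hkr]
    have e2 : P (r - 1) = v (i - 1) := by
      simp only [hPdef]
      have : ((r - 1 : ℕ) : ZMod n) = (r : ZMod n) - 1 := by
        rw [show (r : ℕ) = (r - 1) + 1 by omega]; push_cast; ring
      rw [this, ← hkr]; ring_nf
    have e3 : P (r + 1) = v (i + 1) := by
      simp only [hPdef]
      rw [show ((r + 1 : ℕ) : ZMod n) = (r : ZMod n) + 1 by push_cast; ring, ← hkr]
      ring_nf
    exact ⟨r, hr1, hrn, by rw [e1, e2]; exact hi1, by rw [e1, e3]; exact hi2⟩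
  -- arc data at u'
  have harcn : A' (P (n-1)) u' ∨ A' u' (P (n-1)) := by
    have h := hstep (n-1)
    rwa [show n - 1 + 1 = n by omega, hPn] at h
  have harc0 : A' u' (P 1) ∨ A' (P 1) u' := by
    have h := hstep 0
    rwa [hP0] at h
  have hexcl : ¬ A' (P (n-1)) u' → r0 ≤ n - 2 := by
    intro hnf1
    by_contra hc
    rcases (show r0 = n - 1 ∨ r0 = n by omega) with h | h
    · rw [h, show n - 1 + 1 = n by omega, hPn] at hFFb; exact hnf1 hFFb
    · rw [h, hPn] at hFFa; exact hnf1 hFFa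
  by_cases hcond : (A' u' (P (n-1)) → A u' (P (n-1))) ∧ (A' u' (P 1) → A u' (P 1))
  · -- T : direct transfer of the whole cycle
    apply hA
    apply gen_cycle A n hn P hper hPinj
    · intro t ht
      rcases hstep t with h | h
      · left
        by_cases h0 : t = 0
        · subst h0; rw [hP0] at h ⊢; exact hcond.2 h
        · exact hgenP t _ (by omega) ht h
      · right
        by_cases h0 : t = n - 1
        · subst h0
          rw [show n - 1 + 1 = n by omega, hPn] at h ⊢
          exact hcond.1 h
        · exact hgenP (t+1) _ (by omega) (by omega) h
    · refine ⟨r0, hr01, hr0n, ?_, ?_⟩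
      · by_cases h0 : r0 = 1
        · have := hFFa
          rw [h0, show (1:ℕ) - 1 = 0 by norm_num, hP0] at this
          rw [h0, show (1:ℕ) - 1 = 0 by norm_num, hP0]
          exact hcond.2 this
        · exact hgenP (r0 - 1) _ (by omega) (by omega) hFFa
      · by_cases h0 : r0 = n
        · have := hFFb
          rw [h0, hPn, show n + 1 = 1 + n by omega, hper 1] at this
          rw [h0, hPn, show n + 1 = 1 + n by omega, hper 1]
          exact hcond.2 this
        · exact hgenP r0 _ (by omega) (by omega) hFFb
    · intro r hr1' hr2' hcon
      exact hPBB r hr1' ⟨hliftP _ _ hcon.1, hliftP _ _ hcon.2⟩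
  · have hH : (A' u' (P (n-1)) ∧ ¬ A u' (P (n-1))) ∨ (A' u' (P 1) ∧ ¬ A u' (P 1)) := by
      rcases not_and_or.mp hcond with h | h
      · exact Or.inl (_root_.not_imp.mp h)
      · exact Or.inr (_root_.not_imp.mp h)
    by_cases hU : A u (P (n-1)) ∧ A u (P 1)
    · -- U : replace u' by u in the cycle
      apply hA
      have hup := hU.1
      have huq := hU.2
      have hb1 : A' u' (P (n-1)) := hA'intro _ _ (Or.inr ⟨rfl, hup⟩)
      have hnf1 : ¬ A' (P (n-1)) u' := fun h =>
        hL4 _ hup (hgenP (n-1) u' (by omega) (by omega) h)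
      have hr0 : r0 ≤ n - 2 := hexcl hnf1
      apply seg1_cycle A n P u 1 (n-1) (by omega) (by omega) (by omega) hPinj
      · exact fun t _ _ => hPu t
      · exact huq
      · exact Or.inl hup
      · intro t ht1 ht2
        rcases hstep t with h | h
        · exact Or.inl (hgenP t _ (by omega) (by omega) h)
        · exact Or.inr (hgenP (t+1) _ (by omega) (by omega) h)
      · by_cases h0 : r0 = 1
        · left
          have := hFFb
          rw [h0] at this
          exact hgenP 1 _ (by omega) (by omega) this
        · right; left
          exact ⟨r0, by omega, by omega,
            hgenP (r0-1) _ (by omega) (by omega) hFFa,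
            hgenP r0 _ (by omega) (by omega) hFFb⟩
      · exact hsource _
      · exact fun t ht1 ht2 => hBBP t (by omega)
      · rintro ⟨-, h⟩
        apply hPBB (n-1) (by omega)
        exact ⟨by rw [show n - 1 + 1 = n by omega, hPn]; exact hb1, hliftP _ _ h⟩
    · by_cases hYside : A' u' (P (n-1)) ∧ ¬ A u' (P (n-1))
      · -- case Y2
        have hup : A u (P (n-1)) := (hu'arc _ hYside.1).resolve_left hYside.2
        have hnuq : ¬ A u (P 1) := fun h => hU ⟨hup, h⟩
        have hb1 : A' u' (P (n-1)) := hYside.1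
        have hnf1 : ¬ A' (P (n-1)) u' := fun h =>
          hL4 _ hup (hgenP (n-1) u' (by omega) (by omega) h)
        have hnb2 : ¬ A' (P 1) u' := by
          intro h
          apply hPBB n (by omega)
          constructor
          · rw [show n + 1 = 1 + n by omega, hper 1, hPn]; exact h
          · rw [hPn]; exact hb1
        have hf2 : A' u' (P 1) := harc0.resolve_right hnb2
        have hu'q : A u' (P 1) := (hu'arc _ hf2).resolve_right hnuq
        have hnqu' : ¬ A (P 1) u' := fun h => hnb2 (hlift _ _ h (hPu 1) hne)
        have hr0 : r0 ≤ n - 2 := hexcl hnf1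
        by_cases hs : ∃ s, s < n ∧ P s = vi
        · obtain ⟨s, hsn, hsvi⟩ := hs
          have hs0 : s ≠ 0 := fun h => hviu' (by rw [← hsvi, h, hP0])
          have hs1 : s ≠ 1 := fun h => hnuq (by rw [← h, hsvi]; exact h1)
          have hsn1 : s ≠ n - 1 := fun h => hYside.2 (by rw [← h, hsvi]; exact h2)
          by_cases hFs : A (P s) (P (s+1))
          · -- E with FF at front
            apply hA
            apply seg1_cycle A n P u s (n-1) (by omega) (by omega) (by omega) hPinj
            · exact fun t _ _ => hPu t
            · rw [hsvi]; exact h1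
            · exact Or.inl hup
            · intro t ht1 ht2
              rcases hstep t with h | h
              · exact Or.inl (hgenP t _ (by omega) (by omega) h)
              · exact Or.inr (hgenP (t+1) _ (by omega) (by omega) h)
            · exact Or.inl hFs
            · exact hsource _
            · exact fun t ht1 ht2 => hBBP t (by omega)
            · rintro ⟨-, h⟩
              apply hPBB (n-1) (by omega)
              exact ⟨by rw [show n - 1 + 1 = n by omega, hPn]; exact hb1,
                hliftP _ _ h⟩
          · have hBs : A (P (s+1)) (P s) := by
              rcases hstep s with h | h
              · exact absurd (hgenP s _ (by omega) (by omega) h) hFs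
              · exact hgenP (s+1) _ (by omega) (by omega) h
            have hr0s : r0 ≠ s := fun h =>
              hFs (hgenP s _ (by omega) (by omega) (h ▸ hFFb))
            have hr0s1 : r0 ≠ s + 1 := by
              intro h
              apply hFs
              have := hFFa
              rw [h, show s + 1 - 1 = s by omega] at this
              exact hgenP s _ (by omega) (by omega) this
            by_cases hr0side : r0 < s
            · -- E2
              apply hA
              apply seg1_cycle A n P u' 1 s (by omega) (by omega) (by omega) hPinj
              · exact fun t ht1 ht2 => hPne0 t ht1 (by omega)
              · exact hu'q
              · exact Or.inl (by rw [hsvi]; exact h2)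
              · intro t ht1 ht2
                rcases hstep t with h | h
                · exact Or.inl (hgenP t _ (by omega) (by omega) h)
                · exact Or.inr (hgenP (t+1) _ (by omega) (by omega) h)
              · by_cases h0 : r0 = 1
                · left
                  have := hFFb
                  rw [h0] at this
                  exact hgenP 1 _ (by omega) (by omega) this
                · right; left
                  exact ⟨r0, by omega, by omega,
                    hgenP (r0-1) _ (by omega) (by omega) hFFa,
                    hgenP r0 _ (by omega) (by omega) hFFb⟩
              · exact hnqu'
              · exact fun t ht1 ht2 => hBBP t (by omega)
              · rintro ⟨-, h⟩
                exact hPBB s (by omega) ⟨hliftP _ _ hBs, hliftP _ _ h⟩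
            · -- E with interior FF,  r0 ≥ s + 2
              apply hA
              apply seg1_cycle A n P u s (n-1) (by omega) (by omega) (by omega) hPinj
              · exact fun t _ _ => hPu t
              · rw [hsvi]; exact h1
              · exact Or.inl hup
              · intro t ht1 ht2
                rcases hstep t with h | h
                · exact Or.inl (hgenP t _ (by omega) (by omega) h)
                · exact Or.inr (hgenP (t+1) _ (by omega) (by omega) h)
              · right; left
                exact ⟨r0, by omega, by omega,
                  hgenP (r0-1) _ (by omega) (by omega) hFFa,
                  hgenP r0 _ (by omega) (by omega) hFFb⟩
              · exact hsource _
              · exact fun t ht1 ht2 => hBBP t (by omega)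
              · rintro ⟨-, h⟩
                apply hPBB (n-1) (by omega)
                exact ⟨by rw [show n - 1 + 1 = n by omega, hPn]; exact hb1,
                  hliftP _ _ h⟩
        · -- I_Y : insert vi and u
          push_neg at hs
          apply hA
          set gY : ℕ → V := fun t => if t = 0 then u else if t = 1 then vi
            else P (t - 2) with hgY
          set WY : ℕ → V := fun t => gY (t % (n+2)) with hWY
          have ev : ∀ t, t < n + 2 → WY t = gY t := by
            intro t ht; simp only [hWY, Nat.mod_eq_of_lt ht]
          have ev0 : WY 0 = u := by rw [ev 0 (by omega)]; simp [hgY]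
          have ev1 : WY 1 = vi := by rw [ev 1 (by omega)]; simp [hgY]
          have evP : ∀ t, 2 ≤ t → t ≤ n + 1 → WY t = P (t - 2) := by
            intro t ht1 ht2
            rw [ev t (by omega)]
            simp only [hgY]
            rw [if_neg (by omega), if_neg (by omega)]
          have evL : WY (n+2) = u := by
            simp only [hWY, Nat.mod_self]; simp [hgY]
          have evL1 : WY (n+3) = vi := by
            simp only [hWY, show n + 3 = 1 + (n + 2) by omega, Nat.add_mod_right,
              Nat.mod_eq_of_lt (show 1 < n + 2 by omega)]
            simp [hgY]
          apply gen_cycle A (n+2) (by omega) WY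
          · intro t; simp only [hWY, Nat.add_mod_right]
          · have key : ∀ a b, a < b → b < n + 2 → WY a ≠ WY b := by
              intro a b hab hb
              by_cases ha0 : a = 0
              · subst ha0; rw [ev0]
                by_cases hb1 : b = 1
                · subst hb1; rw [ev1]; exact fun h => hviu h.symm
                · rw [evP b (by omega) (by omega)]
                  exact fun h => hPu _ h.symm
              by_cases ha1 : a = 1
              · subst ha1; rw [ev1, evP b (by omega) (by omega)]
                exact fun h => hs (b-2) (by omega) h.symm
              · rw [evP a (by omega) (by omega), evP b (by omega) (by omega)]
                intro h
                have := hPinj _ _ (by omega) (by omega) h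
                omega
            intro t₁ t₂ ht₁ ht₂ heq
            rcases Nat.lt_trichotomy t₁ t₂ with h | h | h
            · exact absurd heq (key _ _ h ht₂)
            · exact h
            · exact absurd heq.symm (key _ _ h ht₁)
          · intro t ht
            by_cases e0 : t = 0
            · subst e0; rw [ev0, ev1]; exact Or.inl h1
            by_cases e1 : t = 1
            · subst e1
              rw [ev1, evP 2 (by omega) (by omega),
                show (2:ℕ) - 2 = 0 by norm_num, hP0]
              exact Or.inr h2
            by_cases e2 : t = 2
            · subst e2
              rw [evP 2 (by omega) (by omega), evP 3 (by omega) (by omega),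
                show (2:ℕ) - 2 = 0 by norm_num, show (3:ℕ) - 2 = 1 by norm_num,
                hP0]
              exact Or.inl hu'q
            by_cases eL : t = n + 1
            · subst eL
              rw [evP (n+1) (by omega) (by omega), evL,
                show n + 1 - 2 = n - 1 by omega]
              exact Or.inr hup
            · rw [evP t (by omega) (by omega), evP (t+1) (by omega) (by omega),
                show t + 1 - 2 = (t - 2) + 1 by omega]
              rcases hstep (t-2) with h | h
              · exact Or.inl (hgenP (t-2) _ (by omega) (by omega) h)
              · exact Or.inr (hgenP (t-2+1) _ (by omega) (by omega) h)
          · by_cases h0 : r0 = 1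
            · refine ⟨3, by omega, by omega, ?_, ?_⟩
              · rw [show (3:ℕ) - 1 = 2 by norm_num, evP 2 (by omega) (by omega),
                  evP 3 (by omega) (by omega), show (2:ℕ) - 2 = 0 by norm_num,
                  show (3:ℕ) - 2 = 1 by norm_num, hP0]
                exact hu'q
              · rw [evP 3 (by omega) (by omega), evP 4 (by omega) (by omega),
                  show (3:ℕ) - 2 = 1 by norm_num, show (4:ℕ) - 2 = 2 by norm_num]
                have := hFFb
                rw [h0] at this
                exact hgenP 1 _ (by omega) (by omega) this
            · refine ⟨r0 + 2, by omega, by omega, ?_, ?_⟩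
              · rw [show r0 + 2 - 1 = (r0 - 1) + 2 by omega,
                  evP ((r0-1)+2) (by omega) (by omega),
                  evP (r0+2) (by omega) (by omega),
                  show (r0-1) + 2 - 2 = r0 - 1 by omega,
                  show r0 + 2 - 2 = r0 by omega]
                exact hgenP (r0-1) _ (by omega) (by omega) hFFa
              · rw [evP (r0+2) (by omega) (by omega),
                  evP (r0+3) (by omega) (by omega),
                  show r0 + 2 - 2 = r0 by omega,
                  show r0 + 3 - 2 = r0 + 1 by omega]
                exact hgenP r0 _ (by omega) (by omega) hFFb
          · intro r hr1 hr2 hcon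
            obtain ⟨c1, c2⟩ := hcon
            by_cases e1 : r = 1
            · subst e1; rw [ev1, ev0] at c2; exact hsource vi c2
            by_cases e2 : r = 2
            · subst e2
              rw [evP 3 (by omega) (by omega), evP 2 (by omega) (by omega),
                show (3:ℕ) - 2 = 1 by norm_num, show (2:ℕ) - 2 = 0 by norm_num,
                hP0] at c1
              exact hnqu' c1
            by_cases e3 : r = 3
            · subst e3
              rw [show (3:ℕ) - 1 = 2 by norm_num, evP 3 (by omega) (by omega),
                evP 2 (by omega) (by omega), show (3:ℕ) - 2 = 1 by norm_num,
                show (2:ℕ) - 2 = 0 by norm_num, hP0] at c2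
              exact hnqu' c2
            by_cases eL1 : r = n + 1
            · subst eL1
              rw [show n + 1 - 1 = n by omega, evP (n+1) (by omega) (by omega),
                evP n (by omega) (by omega), show n + 1 - 2 = n - 1 by omega,
                show n - 2 = n - 1 - 1 by omega] at c2
              apply hPBB (n-1) (by omega)
              exact ⟨by rw [show n - 1 + 1 = n by omega, hPn]; exact hb1,
                hliftP _ _ c2⟩
            by_cases eL2 : r = n + 2
            · subst eL2
              rw [evL1, evL] at c1
              exact hsource vi c1
            · rw [evP (r+1) (by omega) (by omega), evP r (by omega) (by omega),
                show r + 1 - 2 = (r - 2) + 1 by omega] at c1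
              rw [evP r (by omega) (by omega), evP (r-1) (by omega) (by omega),
                show r - 1 - 2 = (r - 2) - 1 by omega] at c2
              exact hBBP (r-2) (by omega) ⟨c1, c2⟩
      · -- case X2
        have hXside : A' u' (P 1) ∧ ¬ A u' (P 1) := hH.resolve_left hYside
        have huq : A u (P 1) := (hu'arc _ hXside.1).resolve_left hXside.2
        have hnup : ¬ A u (P (n-1)) := fun h => hU ⟨h, huq⟩
        have hnb2 : ¬ A' (P 1) u' := fun h =>
          hL4 _ huq (hgenP 1 u' (by omega) (by omega) h)
        have hnqu' : ¬ A (P 1) u' := fun h => hnb2 (hlift _ _ h (hPu 1) hne)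
        have horient : A' (P (n-1)) u' ∨ A u' (P (n-1)) := by
          rcases harcn with h | h
          · exact Or.inl h
          · rcases hu'arc _ h with h' | h'
            · exact Or.inr h'
            · exact absurd h' hnup
        by_cases hs : ∃ s, s < n ∧ P s = vi
        · obtain ⟨s, hsn, hsvi⟩ := hs
          have hs0 : s ≠ 0 := fun h => hviu' (by rw [← hsvi, h, hP0])
          have hs1 : s ≠ 1 := fun h => hXside.2 (by rw [← h, hsvi]; exact h2)
          have hsn1 : s ≠ n - 1 := fun h => hnup (by rw [← h, hsvi]; exact h1)
          by_cases hf1c : A' (P (n-1)) u'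
          · -- EX2 with FF at the end
            have hpf1 : A (P (n-1)) u' := hgenP _ _ (by omega) (by omega) hf1c
            apply hA
            apply seg1_cycle A n P u' s (n-1) (by omega) (by omega) (by omega) hPinj
            · exact fun t ht1 ht2 => hPne0 t (by omega) (by omega)
            · rw [hsvi]; exact h2
            · exact Or.inr hpf1
            · intro t ht1 ht2
              rcases hstep t with h | h
              · exact Or.inl (hgenP t _ (by omega) (by omega) h)
              · exact Or.inr (hgenP (t+1) _ (by omega) (by omega) h)
            · exact Or.inr (Or.inr hpf1)
            · rw [hsvi]; exact hasym u' vi h2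
            · exact fun t ht1 ht2 => hBBP t (by omega)
            · rintro ⟨h, -⟩
              exact hasym _ _ hpf1 h
          · have hu'p : A u' (P (n-1)) := horient.resolve_left hf1c
            have hb1 : A' u' (P (n-1)) := hlift _ _ hu'p hne (hPu _)
            have hr0 : r0 ≤ n - 2 := hexcl hf1c
            by_cases hFs : A (P s) (P (s+1))
            · -- EX2 with FF at front
              apply hA
              apply seg1_cycle A n P u' s (n-1) (by omega) (by omega) (by omega)
                hPinj
              · exact fun t ht1 ht2 => hPne0 t (by omega) (by omega)
              · rw [hsvi]; exact h2
              · exact Or.inl hu'p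
              · intro t ht1 ht2
                rcases hstep t with h | h
                · exact Or.inl (hgenP t _ (by omega) (by omega) h)
                · exact Or.inr (hgenP (t+1) _ (by omega) (by omega) h)
              · exact Or.inl hFs
              · rw [hsvi]; exact hasym u' vi h2
              · exact fun t ht1 ht2 => hBBP t (by omega)
              · rintro ⟨-, h⟩
                apply hPBB (n-1) (by omega)
                exact ⟨by rw [show n - 1 + 1 = n by omega, hPn]; exact hb1,
                  hliftP _ _ h⟩
            · have hBs : A (P (s+1)) (P s) := by
                rcases hstep s with h | h
                · exact absurd (hgenP s _ (by omega) (by omega) h) hFs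
                · exact hgenP (s+1) _ (by omega) (by omega) h
              have hr0s : r0 ≠ s := fun h =>
                hFs (hgenP s _ (by omega) (by omega) (h ▸ hFFb))
              have hr0s1 : r0 ≠ s + 1 := by
                intro h
                apply hFs
                have := hFFa
                rw [h, show s + 1 - 1 = s by omega] at this
                exact hgenP s _ (by omega) (by omega) this
              by_cases hr0side : r0 < s
              · -- EX
                apply hA
                apply seg1_cycle A n P u 1 s (by omega) (by omega) (by omega)
                  hPinj
                · exact fun t _ _ => hPu t
                · exact huq
                · exact Or.inl (by rw [hsvi]; exact h1)
                · intro t ht1 ht2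
                  rcases hstep t with h | h
                  · exact Or.inl (hgenP t _ (by omega) (by omega) h)
                  · exact Or.inr (hgenP (t+1) _ (by omega) (by omega) h)
                · by_cases h0 : r0 = 1
                  · left
                    have := hFFb
                    rw [h0] at this
                    exact hgenP 1 _ (by omega) (by omega) this
                  · right; left
                    exact ⟨r0, by omega, by omega,
                      hgenP (r0-1) _ (by omega) (by omega) hFFa,
                      hgenP r0 _ (by omega) (by omega) hFFb⟩
                · exact hsource _
                · exact fun t ht1 ht2 => hBBP t (by omega)
                · rintro ⟨-, h⟩
                  exact hPBB s (by omega) ⟨hliftP _ _ hBs, hliftP _ _ h⟩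
              · -- EX2 with interior FF
                apply hA
                apply seg1_cycle A n P u' s (n-1) (by omega) (by omega) (by omega)
                  hPinj
                · exact fun t ht1 ht2 => hPne0 t (by omega) (by omega)
                · rw [hsvi]; exact h2
                · exact Or.inl hu'p
                · intro t ht1 ht2
                  rcases hstep t with h | h
                  · exact Or.inl (hgenP t _ (by omega) (by omega) h)
                  · exact Or.inr (hgenP (t+1) _ (by omega) (by omega) h)
                · right; left
                  exact ⟨r0, by omega, by omega,
                    hgenP (r0-1) _ (by omega) (by omega) hFFa,
                    hgenP r0 _ (by omega) (by omega) hFFb⟩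
                · rw [hsvi]; exact hasym u' vi h2
                · exact fun t ht1 ht2 => hBBP t (by omega)
                · rintro ⟨-, h⟩
                  apply hPBB (n-1) (by omega)
                  exact ⟨by rw [show n - 1 + 1 = n by omega, hPn]; exact hb1,
                    hliftP _ _ h⟩
        · -- I_X : insert vi and u
          push_neg at hs
          apply hA
          have hf1cases : A (P (n-1)) u' ∨
              (A u' (P (n-1)) ∧ A' u' (P (n-1)) ∧ r0 ≤ n - 2) := by
            by_cases hf1c : A' (P (n-1)) u'
            · exact Or.inl (hgenP _ _ (by omega) (by omega) hf1c)
            · have hu'p : A u' (P (n-1)) := horient.resolve_left hf1c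
              exact Or.inr ⟨hu'p, hlift _ _ hu'p hne (hPu _), hexcl hf1c⟩
          set gX : ℕ → V := fun t => if t = 0 then vi else if t = 1 then u
            else P (t - 1) with hgX
          set WX : ℕ → V := fun t => gX (t % (n+2)) with hWX
          have ev : ∀ t, t < n + 2 → WX t = gX t := by
            intro t ht; simp only [hWX, Nat.mod_eq_of_lt ht]
          have ev0 : WX 0 = vi := by rw [ev 0 (by omega)]; simp [hgX]
          have ev1 : WX 1 = u := by rw [ev 1 (by omega)]; simp [hgX]
          have evP : ∀ t, 2 ≤ t → t ≤ n + 1 → WX t = P (t - 1) := by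
            intro t ht1 ht2
            rw [ev t (by omega)]
            simp only [hgX]
            rw [if_neg (by omega), if_neg (by omega)]
          have evL : WX (n+2) = vi := by
            simp only [hWX, Nat.mod_self]; simp [hgX]
          have evL1 : WX (n+3) = u := by
            simp only [hWX, show n + 3 = 1 + (n + 2) by omega, Nat.add_mod_right,
              Nat.mod_eq_of_lt (show 1 < n + 2 by omega)]
            simp [hgX]
          apply gen_cycle A (n+2) (by omega) WX
          · intro t; simp only [hWX, Nat.add_mod_right]
          · have key : ∀ a b, a < b → b < n + 2 → WX a ≠ WX b := by
              intro a b hab hb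
              by_cases ha0 : a = 0
              · subst ha0; rw [ev0]
                by_cases hb1 : b = 1
                · subst hb1; rw [ev1]; exact hviu
                · rw [evP b (by omega) (by omega)]
                  by_cases hbn : b = n + 1
                  · subst hbn
                    rw [show n + 1 - 1 = n by omega, hPn]
                    exact hviu'
                  · exact fun h => hs (b-1) (by omega) h.symm
              by_cases ha1 : a = 1
              · subst ha1; rw [ev1, evP b (by omega) (by omega)]
                exact fun h => hPu _ h.symm
              · rw [evP a (by omega) (by omega), evP b (by omega) (by omega)]
                intro h
                by_cases hbn : b = n + 1
                · subst hbn
                  rw [show n + 1 - 1 = n by omega, hPn] at h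
                  exact hPne0 (a-1) (by omega) (by omega) h
                · have := hPinj _ _ (by omega) (by omega) h
                  omega
            intro t₁ t₂ ht₁ ht₂ heq
            rcases Nat.lt_trichotomy t₁ t₂ with h | h | h
            · exact absurd heq (key _ _ h ht₂)
            · exact h
            · exact absurd heq.symm (key _ _ h ht₁)
          · intro t ht
            by_cases e0 : t = 0
            · subst e0; rw [ev0, ev1]; exact Or.inr h1
            by_cases e1 : t = 1
            · subst e1
              rw [ev1, evP 2 (by omega) (by omega),
                show (2:ℕ) - 1 = 1 by norm_num]
              exact Or.inl huq
            by_cases en : t = n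
            · rw [en]
              rw [evP n (by omega) (by omega), evP (n+1) (by omega) (by omega),
                show n + 1 - 1 = n by omega, hPn]
              rcases hf1cases with h | h
              · exact Or.inl h
              · exact Or.inr h.1
            by_cases eL : t = n + 1
            · subst eL
              rw [evP (n+1) (by omega) (by omega), evL,
                show n + 1 - 1 = n by omega, hPn]
              exact Or.inl h2
            · rw [evP t (by omega) (by omega), evP (t+1) (by omega) (by omega),
                show t + 1 - 1 = (t - 1) + 1 by omega]
              rcases hstep (t-1) with h | h
              · exact Or.inl (hgenP (t-1) _ (by omega) (by omega) h)
              · exact Or.inr (hgenP (t-1+1) _ (by omega) (by omega) h)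
          · rcases hf1cases with hpf1 | ⟨hu'p, hb1, hr0⟩
            · refine ⟨n+1, by omega, by omega, ?_, ?_⟩
              · rw [show n + 1 - 1 = n by omega, evP n (by omega) (by omega),
                  evP (n+1) (by omega) (by omega), show n + 1 - 1 = n by omega,
                  hPn]
                exact hpf1
              · rw [evP (n+1) (by omega) (by omega), evL,
                  show n + 1 - 1 = n by omega, hPn]
                exact h2
            · by_cases h0 : r0 = 1
              · refine ⟨2, by omega, by omega, ?_, ?_⟩
                · rw [show (2:ℕ) - 1 = 1 by norm_num, ev1,
                    evP 2 (by omega) (by omega), show (2:ℕ) - 1 = 1 by norm_num]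
                  exact huq
                · rw [evP 2 (by omega) (by omega), evP 3 (by omega) (by omega),
                    show (2:ℕ) - 1 = 1 by norm_num,
                    show (3:ℕ) - 1 = 2 by norm_num]
                  have := hFFb
                  rw [h0] at this
                  exact hgenP 1 _ (by omega) (by omega) this
              · refine ⟨r0 + 1, by omega, by omega, ?_, ?_⟩
                · rw [show r0 + 1 - 1 = r0 by omega, evP r0 (by omega) (by omega),
                    evP (r0+1) (by omega) (by omega),
                    show r0 + 1 - 1 = r0 by omega]
                  have : A (P (r0 - 1)) (P r0) :=
                    hgenP (r0-1) _ (by omega) (by omega) hFFa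
                  rwa [show r0 - 1 = r0 - 1 by rfl] at this
                · rw [evP (r0+1) (by omega) (by omega),
                    evP (r0+2) (by omega) (by omega),
                    show r0 + 1 - 1 = r0 by omega,
                    show r0 + 2 - 1 = r0 + 1 by omega]
                  exact hgenP r0 _ (by omega) (by omega) hFFb
          · intro r hr1 hr2 hcon
            obtain ⟨c1, c2⟩ := hcon
            by_cases e1 : r = 1
            · subst e1
              rw [evP 2 (by omega) (by omega), ev1,
                show (2:ℕ) - 1 = 1 by norm_num] at c1
              exact hsource _ c1
            by_cases e2 : r = 2
            · subst e2
              rw [show (2:ℕ) - 1 = 1 by norm_num, evP 2 (by omega) (by omega),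
                ev1, show (2:ℕ) - 1 = 1 by norm_num] at c2
              exact hsource _ c2
            by_cases en : r = n
            · rw [en] at c1 c2
              rw [evP (n+1) (by omega) (by omega), evP n (by omega) (by omega),
                show n + 1 - 1 = n by omega, hPn] at c1
              rw [evP n (by omega) (by omega), evP (n-1) (by omega) (by omega),
                show n - 1 - 1 = (n - 1) - 1 by rfl] at c2
              rcases hf1cases with hpf1 | ⟨hu'p, hb1, hr0⟩
              · exact hasym _ _ hpf1 c1
              · apply hPBB (n-1) (by omega)
                exact ⟨by rw [show n - 1 + 1 = n by omega, hPn]; exact hb1,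
                  hliftP _ _ c2⟩
            by_cases eL1 : r = n + 1
            · subst eL1
              rw [evL, evP (n+1) (by omega) (by omega),
                show n + 1 - 1 = n by omega, hPn] at c1
              exact hasym u' vi h2 c1
            by_cases eL2 : r = n + 2
            · subst eL2
              rw [show n + 2 - 1 = n + 1 by omega, evL,
                evP (n+1) (by omega) (by omega),
                show n + 1 - 1 = n by omega, hPn] at c2
              exact hasym u' vi h2 c2
            · rw [evP (r+1) (by omega) (by omega), evP r (by omega) (by omega),
                show r + 1 - 1 = (r - 1) + 1 by omega] at c1
              rw [evP r (by omega) (by omega), evP (r-1) (by omega) (by omega),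
                show r - 1 - 1 = (r - 1) - 1 by rfl] at c2
              exact hBBP (r-1) (by omega) ⟨c1, c2⟩
end

section
/- If G admits a homogeneous arc labeling with all labels lying in the integer interval [2, m−1] for some integer m, then G is isomorphic to a subgraph of a graph obtained from the shift graph H_m by iteratively adding false twins. -/
/-- Homogeneous arc labeling with integer labels. -/
def IsHomogeneousArcLabelingZ {V : Type*} (A : V → V → Prop) (ℓ : V → V → ℤ) : Prop :=
  (∀ u v w, A u v → A u w → ℓ u v = ℓ u w) ∧
  (∀ u v w, A u v → A w v → ℓ u v = ℓ w v) ∧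
  (∀ u v w, A u v → A v w → ℓ u v < ℓ v w)

/-- Vertices of the shift graph `H_m` (integer version). -/
def ShiftVert (m : ℕ) := {p : ℤ × ℤ // 1 ≤ p.1 ∧ p.1 < p.2 ∧ p.2 ≤ (m : ℤ)}

/-- If a (finite) graph `G` admits an orientation with a homogeneous arc labeling
whose integer labels all lie in `[2, m-1]`, then `G` is isomorphic to a subgraph of
a graph obtained from the shift graph `H_m` by iteratively adding false twins:
there is an injection of `V(G)` into copies `(p, t)` of the vertices `p` of `H_m`
(the second coordinate distinguishing the twins) so that adjacent vertices of `G`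
are sent to (copies of) adjacent vertices of `H_m`. -/
theorem stmt15 {V : Type*} [Finite V] (G : SimpleGraph V) (m : ℕ) (hm : 2 ≤ m)
    (A : V → V → Prop) (ℓ : V → V → ℤ)
    (hor : IsOrientation G A)
    (hhom : IsHomogeneousArcLabelingZ A ℓ)
    (hrange : ∀ u v, A u v → 2 ≤ ℓ u v ∧ ℓ u v ≤ (m : ℤ) - 1) :
    ∃ φ : V → ShiftVert m × ℕ, Function.Injective φ ∧
      ∀ u v, G.Adj u v →
        ((φ u).1.val.2 = (φ v).1.val.1 ∨ (φ v).1.val.2 = (φ u).1.val.1) := by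
  classical
  obtain ⟨e, he⟩ := Countable.exists_injective_nat V
  obtain ⟨h1, h2, h3⟩ := hhom
  set fin : V → ℤ := fun v => if h : ∃ u, A u v then ℓ h.choose v else 1 with hfin
  set fout : V → ℤ := fun v => if h : ∃ w, A v w then ℓ v h.choose else (m : ℤ) with hfout
  have hin_eq : ∀ u v, A u v → fin v = ℓ u v := by
    intro u v h
    have hex : ∃ u, A u v := ⟨u, h⟩
    simp only [hfin, dif_pos hex]
    exact h2 _ _ _ hex.choose_spec h
  have hout_eq : ∀ u v, A u v → fout u = ℓ u v := by
    intro u v h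
    have hex : ∃ w, A u w := ⟨v, h⟩
    simp only [hfout, dif_pos hex]
    exact h1 _ _ _ hex.choose_spec h
  have hm' : (2 : ℤ) ≤ (m : ℤ) := by exact_mod_cast hm
  have hprop : ∀ v, 1 ≤ fin v ∧ fin v < fout v ∧ fout v ≤ (m : ℤ) := by
    intro v
    by_cases hi : ∃ u, A u v
    · obtain ⟨u, hu⟩ := hi
      have h1' := hin_eq u v hu
      have hr := hrange u v hu
      by_cases ho : ∃ w, A v w
      · obtain ⟨w, hw⟩ := ho
        have h2' := hout_eq v w hw
        have hr2 := hrange v w hw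
        refine ⟨by omega, ?_, by omega⟩
        rw [h1', h2']; exact h3 _ _ _ hu hw
      · have : fout v = (m : ℤ) := by simp [hfout, ho]
        refine ⟨by omega, by omega, by omega⟩
    · have hi' : fin v = 1 := by simp [hfin, hi]
      by_cases ho : ∃ w, A v w
      · obtain ⟨w, hw⟩ := ho
        have h2' := hout_eq v w hw
        have hr2 := hrange v w hw
        refine ⟨by omega, by omega, by omega⟩
      · have : fout v = (m : ℤ) := by simp [hfout, ho]
        refine ⟨by omega, by omega, by omega⟩
  refine ⟨fun v => (⟨(fin v, fout v), (hprop v).1, (hprop v).2.1, (hprop v).2.2⟩, e v),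
    ?_, ?_⟩
  · intro a b hab
    exact he (congrArg Prod.snd hab)
  · intro u v huv
    rcases (hor.1 u v).mp huv with h | h
    · left; simp only
      rw [hout_eq u v h, hin_eq u v h]
    · right; simp only
      rw [hout_eq v u h, hin_eq v u h]
end

section
/- If a graph G admits an orientation with a homogeneous arc labeling and G^v is obtained from G by adding a false twin v' of a vertex v (N(v') = N(v), v' not adjacent to v), then G^v also admits an orientation with a homogeneous arc labeling. -/
/-- The graph `G^v` obtained from `G` by adding a false twin (`none`) of the vertex
`v`: the new vertex is non-adjacent to `v` and has the same neighborhood as `v`. -/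
def addFalseTwin {V : Type*} (G : SimpleGraph V) (v : V) : SimpleGraph (Option V) :=
  SimpleGraph.fromRel (fun x y =>
    match x, y with
    | some a, some b => G.Adj a b
    | some a, none => G.Adj a v
    | _, _ => False)

/-- If `G` admits an orientation with a homogeneous arc labeling, then so does the
graph `G^v` obtained by adding a false twin of any vertex `v`. -/
theorem stmt17 {V : Type*} (G : SimpleGraph V) (v : V)
    (h : ∃ (A : V → V → Prop) (ℓ : V → V → ℝ),
      IsOrientation G A ∧ IsHomogeneousArcLabeling A ℓ) :
    ∃ (A : Option V → Option V → Prop) (ℓ : Option V → Option V → ℝ),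
      IsOrientation (addFalseTwin G v) A ∧ IsHomogeneousArcLabeling A ℓ := by

  obtain ⟨A, ℓ, ⟨hor, hanti⟩, h1, h2, h3⟩ := h
  have hirr : ∀ a, ¬ A a a := fun a ha => hanti _ _ ha ha
  refine ⟨fun x y => A (x.getD v) (y.getD v) ∧ ¬(x = none ∧ y = none),
    fun x y => ℓ (x.getD v) (y.getD v), ⟨?_, ?_⟩, ?_, ?_, ?_⟩
  · rintro (_|a) (_|b) <;>
      simp [addFalseTwin, SimpleGraph.fromRel_adj, hor, G.irrefl] <;> aesop
  · rintro x y ⟨hxy, _⟩ ⟨hyx, _⟩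
    exact hanti _ _ hxy hyx
  · rintro x y w ⟨hxy, _⟩ ⟨hxw, _⟩
    exact h1 _ _ _ hxy hxw
  · rintro x y w ⟨hxy, _⟩ ⟨hwy, _⟩
    exact h2 _ _ _ hxy hwy
  · rintro x y w ⟨hxy, _⟩ ⟨hyw, _⟩
    exact h3 _ _ _ hxy hyw
end
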